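/- arXiv:2512.24800 — 8 statements merged into one kernel-verified Lean document; each statement's English description precedes it below -/
import Mathlib

section
/- Let R be a commutative semiring, S a multiplicative subset of R, and P an S-prime ideal of R. If A₁, …, Aₙ are finitely many S-primary k-ideals of R, each disjoint from S and each satisfying √Aᵢ = P, then their intersection A = A₁ ∩ ⋯ ∩ Aₙ is an S-primary k-ideal of R, is disjoint from S, and satisfies √A = P. -/
/-! If `s i ∈ S` witnesses that `A i` is `S`-primary, then `∏ i, s i` witnesses it for the
intersection: when `a * b` lies in every `A i`, either some `s i * b` lands in the common radical
`P`, which is also the radical of the intersection, or every `s i * a` lands in `A i`. -/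

namespace Ideal

variable {R ι : Type*} [CommSemiring R]

theorem radical_iInf_of_radical_eq [Fintype ι] [Nonempty ι] {A : ι → Ideal R} {P : Ideal R}
    (hA : ∀ i, (A i).radical = P) : (⨅ i, A i).radical = P := by
  obtain ⟨i⟩ := ‹Nonempty ι›
  rw [← Finset.inf_univ_eq_iInf, radical_finset_inf (Finset.mem_univ i)
    (fun j _ => (hA j).trans (hA i).symm), hA i]

theorem iInf_add_mem_cancel {A : ι → Ideal R}
    (hA : ∀ i, ∀ a b : R, a + b ∈ A i → a ∈ A i → b ∈ A i) (a b : R) :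
    a + b ∈ ⨅ i, A i → a ∈ ⨅ i, A i → b ∈ ⨅ i, A i := by
  simp only [mem_iInf]
  exact fun hab ha i => hA i a b (hab i) (ha i)

theorem prod_mul_mem [Fintype ι] {I : Ideal R} (s : ι → R) (i : ι) {x : R}
    (h : s i * x ∈ I) : (∏ j, s j) * x ∈ I :=
  I.mem_of_dvd (mul_dvd_mul_right (Finset.dvd_prod_of_mem s (Finset.mem_univ i)) x) h

theorem prod_mul_mem_iInf_or_mem_radical [Fintype ι] {A : ι → Ideal R} (s : ι → R)
    (hs : ∀ i, ∀ a b : R, a * b ∈ A i → s i * a ∈ A i ∨ s i * b ∈ (A i).radical)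
    (hrad : ∀ i, (A i).radical = (⨅ j, A j).radical) (a b : R) (hab : a * b ∈ ⨅ i, A i) :
    (∏ i, s i) * a ∈ ⨅ i, A i ∨ (∏ i, s i) * b ∈ (⨅ i, A i).radical := by
  rw [mem_iInf] at hab
  by_cases hb : ∃ i, s i * b ∈ (A i).radical
  · obtain ⟨i, hi⟩ := hb
    exact Or.inr (prod_mul_mem s i (hrad i ▸ hi))
  · simp only [not_exists] at hb
    exact Or.inl <| mem_iInf.mpr fun i =>
      prod_mul_mem s i ((hs i a b (hab i)).resolve_right (hb i))

end Ideal

theorem finite_inter_S_P_primary_general {R : Type*} [CommSemiring R] (S : Set R)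
    (hS1 : (1 : R) ∈ S) (hSmul : ∀ s ∈ S, ∀ t ∈ S, s * t ∈ S)
    (P : Ideal R)
    (n : ℕ) (hn : 0 < n) (A : Fin n → Ideal R)
    (hAS : ∀ i, Disjoint S ((A i : Set R)))
    (hAk : ∀ i, ∀ a b : R, a + b ∈ A i → a ∈ A i → b ∈ A i)
    (hAprim : ∀ i, ∃ s ∈ S, ∀ a b : R,
      a * b ∈ A i → s * a ∈ A i ∨ s * b ∈ (A i).radical)
    (hArad : ∀ i, (A i).radical = P) :
    Disjoint S (((⨅ i, A i : Ideal R) : Set R)) ∧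
    (∀ a b : R, a + b ∈ (⨅ i, A i : Ideal R) → a ∈ (⨅ i, A i : Ideal R) →
      b ∈ (⨅ i, A i : Ideal R)) ∧
    (∃ s ∈ S, ∀ a b : R, a * b ∈ (⨅ i, A i : Ideal R) →
      s * a ∈ (⨅ i, A i : Ideal R) ∨ s * b ∈ (⨅ i, A i : Ideal R).radical) ∧
    (⨅ i, A i : Ideal R).radical = P := by
  have : NeZero n := ⟨hn.ne'⟩
  have hrad : (⨅ i, A i).radical = P := Ideal.radical_iInf_of_radical_eq hArad
  choose s hsS hs using hAprim
  have hprod : ∏ i, s i ∈ S :=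
    Finset.prod_induction s (· ∈ S) (fun a b ha hb => hSmul a ha b hb) hS1 fun i _ => hsS i
  exact ⟨(hAS 0).mono_right (iInf_le A _), Ideal.iInf_add_mem_cancel hAk,
    ⟨∏ i, s i, hprod,
      Ideal.prod_mul_mem_iInf_or_mem_radical s hs fun i => (hArad i).trans hrad.symm⟩, hrad⟩

/-- The finite intersection of S-k-P-primary ideals is an S-k-P-primary ideal. -/
theorem finite_inter_S_P_primary {R : Type*} [CommSemiring R] (S : Set R)
    (hS1 : (1 : R) ∈ S) (hSmul : ∀ s ∈ S, ∀ t ∈ S, s * t ∈ S)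
    (P : Ideal R) (hPS : Disjoint S (P : Set R))
    (hPprime : ∃ s ∈ S, ∀ a b : R, a * b ∈ P → s * a ∈ P ∨ s * b ∈ P)
    (n : ℕ) (hn : 0 < n) (A : Fin n → Ideal R)
    (hAS : ∀ i, Disjoint S ((A i : Set R)))
    (hAk : ∀ i, ∀ a b : R, a + b ∈ A i → a ∈ A i → b ∈ A i)
    (hAprim : ∀ i, ∃ s ∈ S, ∀ a b : R,
      a * b ∈ A i → s * a ∈ A i ∨ s * b ∈ (A i).radical)
    (hArad : ∀ i, (A i).radical = P) :
    Disjoint S (((⨅ i, A i : Ideal R) : Set R)) ∧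
    (∀ a b : R, a + b ∈ (⨅ i, A i : Ideal R) → a ∈ (⨅ i, A i : Ideal R) →
      b ∈ (⨅ i, A i : Ideal R)) ∧
    (∃ s ∈ S, ∀ a b : R, a * b ∈ (⨅ i, A i : Ideal R) →
      s * a ∈ (⨅ i, A i : Ideal R) ∨ s * b ∈ (⨅ i, A i : Ideal R).radical) ∧
    (⨅ i, A i : Ideal R).radical = P :=
  finite_inter_S_P_primary_general S hS1 hSmul P n hn A hAS hAk hAprim hArad
end

section
/- Let R be a commutative semiring that is additively cancellative (a + b = a + c implies b = c), zerosumfree (a + b = 0 implies a = 0 and b = 0), and yoked (for all a, b ∈ R there exists c ∈ R with a + c = b or b + c = a), let S be a multiplicative subset of R, and suppose R is S-Noetherian. Then every S-k-irreducible ideal A of R (disjoint from S) is an S-primary k-ideal: for all a, b ∈ R with ab ∈ A, if sb ∉ A for every s ∈ S, then there exists r ∈ S with ra ∈ √A. -/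
section Aux

variable {R : Type*} [CommSemiring R]

/-- k-closure of an ideal. -/
def kcl (B : Ideal R) : Ideal R where
  carrier := {x | ∃ u ∈ B, x + u ∈ B}
  add_mem' := by
    rintro x y ⟨u, hu, hxu⟩ ⟨v, hv, hyv⟩
    refine ⟨u + v, B.add_mem hu hv, ?_⟩
    have h : x + y + (u + v) = (x + u) + (y + v) := by ring
    rw [h]; exact B.add_mem hxu hyv
  zero_mem' := ⟨0, B.zero_mem, by simpa using B.zero_mem⟩
  smul_mem' := by
    rintro r x ⟨u, hu, hxu⟩
    refine ⟨r * u, B.mul_mem_left r hu, ?_⟩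
    have h : r • x + r * u = r * (x + u) := by
      rw [smul_eq_mul, mul_add]
    rw [h]; exact B.mul_mem_left r hxu

lemma mem_kcl {B : Ideal R} {x : R} : x ∈ kcl B ↔ ∃ u ∈ B, x + u ∈ B := Iff.rfl

lemma le_kcl (B : Ideal R) : B ≤ kcl B :=
  fun x hx => ⟨0, B.zero_mem, by simpa using hx⟩

lemma kcl_k (B : Ideal R) : ∀ x y : R, x + y ∈ kcl B → x ∈ kcl B → y ∈ kcl B := by
  rintro x y ⟨u, hu, hxyu⟩ ⟨v, hv, hxv⟩
  refine ⟨u + (x + v), B.add_mem hu hxv, ?_⟩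
  have h : y + (u + (x + v)) = (x + y + u) + v := by ring
  rw [h]; exact B.add_mem hxyu hv

/-- The ideal (A : aⁿ). -/
def colPow (A : Ideal R) (a : R) (n : ℕ) : Ideal R where
  carrier := {x | a ^ n * x ∈ A}
  add_mem' := by
    intro x y hx hy
    show a ^ n * (x + y) ∈ A
    rw [mul_add]; exact A.add_mem hx hy
  zero_mem' := by
    show a ^ n * 0 ∈ A
    rw [mul_zero]; exact A.zero_mem
  smul_mem' := by
    intro r x hx
    show a ^ n * (r • x) ∈ A
    rw [smul_eq_mul, mul_left_comm]
    exact A.mul_mem_left r hx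

lemma mem_colPow {A : Ideal R} {a : R} {n : ℕ} {x : R} :
    x ∈ colPow A a n ↔ a ^ n * x ∈ A := Iff.rfl

lemma colPow_mono {A : Ideal R} {a : R} {n k : ℕ} :
    colPow A a n ≤ colPow A a (n + k) := by
  intro x hx
  rw [mem_colPow] at hx ⊢
  have h : a ^ (n + k) * x = a ^ k * (a ^ n * x) := by ring
  rw [h]; exact A.mul_mem_left _ hx

/-- The union ⋃ₙ (A : aⁿ). -/
def colPowUnion (A : Ideal R) (a : R) : Ideal R where
  carrier := {x | ∃ n, a ^ n * x ∈ A}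
  add_mem' := by
    rintro x y ⟨n, hx⟩ ⟨m, hy⟩
    refine ⟨n + m, ?_⟩
    have h : a ^ (n + m) * (x + y) = a ^ m * (a ^ n * x) + a ^ n * (a ^ m * y) := by ring
    rw [h]; exact A.add_mem (A.mul_mem_left _ hx) (A.mul_mem_left _ hy)
  zero_mem' := ⟨0, by simpa using A.zero_mem⟩
  smul_mem' := by
    rintro r x ⟨n, hx⟩
    refine ⟨n, ?_⟩
    show a ^ n * (r • x) ∈ A
    rw [smul_eq_mul, mul_left_comm]
    exact A.mul_mem_left r hx

lemma mem_colPowUnion {A : Ideal R} {a : R} {x : R} :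
    x ∈ colPowUnion A a ↔ ∃ n, a ^ n * x ∈ A := Iff.rfl

lemma fg_le_colPow {A : Ideal R} {a : R} {J : Ideal R} (hfg : J.FG)
    (hJ : J ≤ colPowUnion A a) : ∃ n, J ≤ colPow A a n := by
  revert hJ
  refine Submodule.fg_induction
    (motive := fun N _ => N ≤ colPowUnion A a → ∃ n, N ≤ colPow A a n) ?_ ?_ J hfg
  · intro x hx
    obtain ⟨n, hn⟩ := hx (Submodule.mem_span_singleton_self x)
    exact ⟨n, Submodule.span_le.mpr (Set.singleton_subset_iff.mpr hn)⟩
  · intro N₁ N₂ _ _ h₁ h₂ hle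
    obtain ⟨n₁, hn₁⟩ := h₁ (le_trans le_sup_left hle)
    obtain ⟨n₂, hn₂⟩ := h₂ (le_trans le_sup_right hle)
    exact ⟨n₁ + n₂, sup_le (le_trans hn₁ colPow_mono)
      (le_trans hn₂ (by rw [Nat.add_comm]; exact colPow_mono))⟩

lemma mem_sup_span {A : Ideal R} {t u : R} (hu : u ∈ A ⊔ Ideal.span {t}) :
    ∃ p ∈ A, ∃ c : R, p + c * t = u := by
  obtain ⟨p, hp, z, hz, hpz⟩ := Submodule.mem_sup.mp hu
  obtain ⟨c, hc⟩ := Ideal.mem_span_singleton'.mp hz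
  exact ⟨p, hp, c, by rw [hc]; exact hpz⟩

end Aux

/-- In an additively cancellative, zerosumfree, yoked, commutative S-Noetherian
semiring, every S-k-irreducible ideal is an S-primary k-ideal. -/
theorem sKIrreducible_isSPrimary {R : Type*} [CommSemiring R]
    (hcanc : ∀ a b c : R, a + b = a + c → b = c)
    (hzsf : ∀ a b : R, a + b = 0 → a = 0 ∧ b = 0)
    (hyoked : ∀ a b : R, ∃ c : R, a + c = b ∨ b + c = a)
    (S : Set R) (hS1 : (1 : R) ∈ S) (hSmul : ∀ s ∈ S, ∀ t ∈ S, s * t ∈ S)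
    (hNoeth : ∀ I : Ideal R, ∃ s ∈ S, ∃ J : Ideal R, J.FG ∧ (∀ x ∈ I, s * x ∈ J) ∧ J ≤ I)
    (A : Ideal R) (hAS : Disjoint S (A : Set R))
    (hAk : ∀ a b : R, a + b ∈ A → a ∈ A → b ∈ A)
    (hirr : ∀ I J : Ideal R, (∀ a b : R, a + b ∈ I → a ∈ I → b ∈ I) →
      (∀ a b : R, a + b ∈ J → a ∈ J → b ∈ J) →
      ∀ s ∈ S, (∀ x ∈ I ⊓ J, s * x ∈ A) → A ≤ I ⊓ J →
      ∃ s' ∈ S, (∀ x ∈ I, s * s' * x ∈ A) ∨ (∀ x ∈ J, s * s' * x ∈ A)) :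
    ∀ a b : R, a * b ∈ A → (∀ s ∈ S, s * b ∉ A) → ∃ r ∈ S, r * a ∈ A.radical := by
  intro a b hab hb
  -- stabilize the chain (A : aⁿ)
  obtain ⟨s, hsS, J, hJfg, hsC, hJC⟩ := hNoeth (colPowUnion A a)
  obtain ⟨n, hJn⟩ := fg_le_colPow hJfg hJC
  have hstab : ∀ x : R, (∃ m, a ^ m * x ∈ A) → a ^ n * (s * x) ∈ A := by
    intro x hx
    exact hJn (hsC x hx)
  -- the two k-ideals
  set I' : Ideal R := kcl (A ⊔ Ideal.span {a ^ (n + 1)}) with hI'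
  set J' : Ideal R := kcl (A ⊔ Ideal.span {b}) with hJ'
  -- key: s • (I' ⊓ J') ⊆ A
  have hsx : ∀ x ∈ I' ⊓ J', s * x ∈ A := by
    intro x hx
    obtain ⟨hxI, hxJ⟩ := Submodule.mem_inf.mp hx
    obtain ⟨u, hu, hxu⟩ := hxI
    obtain ⟨w, hw, hxw⟩ := hxJ
    obtain ⟨p₁, hp₁, c₁, hpc₁⟩ := mem_sup_span hu
    obtain ⟨p₂, hp₂, c₂, hpc₂⟩ := mem_sup_span hxu
    obtain ⟨q₁, hq₁, d₁, hqd₁⟩ := mem_sup_span hw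
    obtain ⟨q₂, hq₂, d₂, hqd₂⟩ := mem_sup_span hxw
    -- E1 : x + (p₁ + c₁ * a^(n+1)) = p₂ + c₂ * a^(n+1)
    have E1 : x + (p₁ + c₁ * a ^ (n + 1)) = p₂ + c₂ * a ^ (n + 1) := by
      rw [hpc₁, hpc₂]
    -- E2 : x + (q₁ + d₁ * b) = q₂ + d₂ * b
    have E2 : x + (q₁ + d₁ * b) = q₂ + d₂ * b := by rw [hqd₁, hqd₂]
    -- Step A : a * x ∈ A
    have hax : a * x ∈ A := by
      have h1 : a * q₁ + d₁ * (a * b) ∈ A :=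
        A.add_mem (A.mul_mem_left a hq₁) (A.mul_mem_left d₁ hab)
      have h2 : (a * q₁ + d₁ * (a * b)) + a * x ∈ A := by
        have heq : (a * q₁ + d₁ * (a * b)) + a * x = a * q₂ + d₂ * (a * b) := by
          calc (a * q₁ + d₁ * (a * b)) + a * x = a * (x + (q₁ + d₁ * b)) := by ring
            _ = a * (q₂ + d₂ * b) := by rw [E2]
            _ = a * q₂ + d₂ * (a * b) := by ring
        rw [heq]
        exact A.add_mem (A.mul_mem_left a hq₂) (A.mul_mem_left d₂ hab)
      exact hAk _ _ h2 h1
    obtain ⟨e, he | he⟩ := hyoked c₁ c₂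
    · -- c₁ + e = c₂
      have E1' : x + p₁ = p₂ + e * a ^ (n + 1) := by
        apply hcanc (c₁ * a ^ (n + 1))
        calc c₁ * a ^ (n + 1) + (x + p₁) = x + (p₁ + c₁ * a ^ (n + 1)) := by ring
          _ = p₂ + c₂ * a ^ (n + 1) := E1
          _ = p₂ + (c₁ + e) * a ^ (n + 1) := by rw [he]
          _ = c₁ * a ^ (n + 1) + (p₂ + e * a ^ (n + 1)) := by ring
      have het : a ^ (n + 2) * e ∈ A := by
        have h3 : a * p₂ + a ^ (n + 2) * e ∈ A := by
          have heq : a * p₂ + a ^ (n + 2) * e = a * x + a * p₁ := by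
            calc a * p₂ + a ^ (n + 2) * e = a * (p₂ + e * a ^ (n + 1)) := by ring
              _ = a * (x + p₁) := by rw [E1']
              _ = a * x + a * p₁ := by ring
          rw [heq]
          exact A.add_mem hax (A.mul_mem_left a hp₁)
        exact hAk _ _ h3 (A.mul_mem_left a hp₂)
      have hse : a ^ n * (s * e) ∈ A := hstab e ⟨n + 2, het⟩
      have h4 : s * p₁ + s * x ∈ A := by
        have heq : s * p₁ + s * x = s * p₂ + a * (a ^ n * (s * e)) := by
          calc s * p₁ + s * x = s * (x + p₁) := by ring
            _ = s * (p₂ + e * a ^ (n + 1)) := by rw [E1']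
            _ = s * p₂ + a * (a ^ n * (s * e)) := by ring
        rw [heq]
        exact A.add_mem (A.mul_mem_left s hp₂) (A.mul_mem_left a hse)
      exact hAk _ _ h4 (A.mul_mem_left s hp₁)
    · -- c₂ + e = c₁
      have E1' : x + p₁ + e * a ^ (n + 1) = p₂ := by
        apply hcanc (c₂ * a ^ (n + 1))
        calc c₂ * a ^ (n + 1) + (x + p₁ + e * a ^ (n + 1))
            = x + (p₁ + (c₂ + e) * a ^ (n + 1)) := by ring
          _ = x + (p₁ + c₁ * a ^ (n + 1)) := by rw [he]
          _ = p₂ + c₂ * a ^ (n + 1) := E1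
          _ = c₂ * a ^ (n + 1) + p₂ := by ring
      have het : a ^ (n + 2) * e ∈ A := by
        have h3 : (a * x + a * p₁) + a ^ (n + 2) * e ∈ A := by
          have heq : (a * x + a * p₁) + a ^ (n + 2) * e = a * p₂ := by
            calc (a * x + a * p₁) + a ^ (n + 2) * e
                = a * (x + p₁ + e * a ^ (n + 1)) := by ring
              _ = a * p₂ := by rw [E1']
          rw [heq]
          exact A.mul_mem_left a hp₂
        exact hAk _ _ h3 (A.add_mem hax (A.mul_mem_left a hp₁))
      have hse : a ^ n * (s * e) ∈ A := hstab e ⟨n + 2, het⟩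
      have h4 : (s * p₁ + a * (a ^ n * (s * e))) + s * x ∈ A := by
        have heq : (s * p₁ + a * (a ^ n * (s * e))) + s * x = s * p₂ := by
          calc (s * p₁ + a * (a ^ n * (s * e))) + s * x
              = s * (x + p₁ + e * a ^ (n + 1)) := by ring
            _ = s * p₂ := by rw [E1']
        rw [heq]
        exact A.mul_mem_left s hp₂
      exact hAk _ _ h4 (A.add_mem (A.mul_mem_left s hp₁) (A.mul_mem_left a hse))
  -- A ≤ I' ⊓ J'
  have hAle : A ≤ I' ⊓ J' :=
    le_inf (le_trans le_sup_left (le_kcl _)) (le_trans le_sup_left (le_kcl _))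
  obtain ⟨s', hs'S, hcase⟩ := hirr I' J' (kcl_k _) (kcl_k _) s hsS hsx hAle
  rcases hcase with hca | hcb
  · -- s * s' * a^(n+1) ∈ A, so s * s' * a ∈ √A
    have hmem : a ^ (n + 1) ∈ I' :=
      le_kcl _ (Submodule.mem_sup_right (Ideal.mem_span_singleton_self _))
    have h5 : s * s' * a ^ (n + 1) ∈ A := hca _ hmem
    refine ⟨s * s', hSmul s hsS s' hs'S, ?_⟩
    rw [Ideal.mem_radical_iff]
    refine ⟨n + 1, ?_⟩
    have heq : (s * s' * a) ^ (n + 1) = (s * s') ^ n * (s * s' * a ^ (n + 1)) := by ring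
    rw [heq]
    exact A.mul_mem_left _ h5
  · -- contradiction: s * s' * b ∈ A
    exfalso
    have hmem : b ∈ J' :=
      le_kcl _ (Submodule.mem_sup_right (Ideal.mem_span_singleton_self _))
    exact hb (s * s') (hSmul s hsS s' hs'S) (hcb _ hmem)
end

section
/- Let R be a commutative semiring that is additively cancellative, zerosumfree, and yoked, let S be a multiplicative subset of R, and suppose R is S-Noetherian. Then every proper k-ideal I of R disjoint from S can be written as a finite intersection I = A₁ ∩ ⋯ ∩ Aₙ where each Aᵢ is an S-primary k-ideal of R disjoint from S. -/
namespace SKP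

variable {R : Type*} [CommSemiring R]

def IsK (I : Ideal R) : Prop := ∀ a b : R, a + b ∈ I → a ∈ I → b ∈ I

/-- k-closure. -/
def cl (I : Ideal R) : Ideal R where
  carrier := {z | ∃ u ∈ I, ∃ v ∈ I, z + u = v}
  zero_mem' := ⟨0, I.zero_mem, 0, I.zero_mem, by simp⟩
  add_mem' := by
    rintro a b ⟨u₁, hu₁, v₁, hv₁, h₁⟩ ⟨u₂, hu₂, v₂, hv₂, h₂⟩
    refine ⟨u₁ + u₂, add_mem hu₁ hu₂, v₁ + v₂, add_mem hv₁ hv₂, ?_⟩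
    calc a + b + (u₁ + u₂) = (a + u₁) + (b + u₂) := by ring
      _ = v₁ + v₂ := by rw [h₁, h₂]
  smul_mem' := by
    rintro c x ⟨u, hu, v, hv, h⟩
    refine ⟨c * u, Ideal.mul_mem_left _ _ hu, c * v, Ideal.mul_mem_left _ _ hv, ?_⟩
    rw [smul_eq_mul, ← mul_add, h]

lemma mem_cl {I : Ideal R} {z : R} : z ∈ cl I ↔ ∃ u ∈ I, ∃ v ∈ I, z + u = v := Iff.rfl

lemma le_cl (I : Ideal R) : I ≤ cl I := fun x hx => ⟨0, I.zero_mem, x, hx, by simp⟩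

lemma isK_cl (hcanc : ∀ a b c : R, a + b = a + c → b = c) (I : Ideal R) : IsK (cl I) := by
  rintro a b ⟨u₁, hu₁, v₁, hv₁, h₁⟩ ⟨u₂, hu₂, v₂, hv₂, h₂⟩
  refine ⟨u₁ + v₂, add_mem hu₁ hv₂, v₁ + u₂, add_mem hv₁ hu₂, ?_⟩
  apply hcanc a
  calc a + (b + (u₁ + v₂)) = (a + b + u₁) + v₂ := by ring
    _ = v₁ + v₂ := by rw [h₁]
    _ = v₁ + (a + u₂) := by rw [h₂]
    _ = a + (v₁ + u₂) := by ring

/-- `{ i + s*b : i ∈ I, b ∈ B }`. -/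
def mix (I : Ideal R) (s : R) (B : Ideal R) : Ideal R where
  carrier := {z | ∃ i ∈ I, ∃ b ∈ B, z = i + s * b}
  zero_mem' := ⟨0, I.zero_mem, 0, B.zero_mem, by simp⟩
  add_mem' := by
    rintro a b ⟨i₁, hi₁, b₁, hb₁, rfl⟩ ⟨i₂, hi₂, b₂, hb₂, rfl⟩
    exact ⟨i₁ + i₂, add_mem hi₁ hi₂, b₁ + b₂, add_mem hb₁ hb₂, by ring⟩
  smul_mem' := by
    rintro c x ⟨i, hi, b, hb, rfl⟩
    refine ⟨c * i, Ideal.mul_mem_left _ _ hi, c * b, Ideal.mul_mem_left _ _ hb, ?_⟩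
    simp only [smul_eq_mul]; ring

lemma mem_mix {I B : Ideal R} {s z : R} :
    z ∈ mix I s B ↔ ∃ i ∈ I, ∃ b ∈ B, z = i + s * b := Iff.rfl

lemma le_mix (I : Ideal R) (s : R) (B : Ideal R) : I ≤ mix I s B :=
  fun z hz => ⟨z, hz, 0, B.zero_mem, by simp⟩

/-- colon ideal `(A : c)`. -/
def colI (A : Ideal R) (c : R) : Ideal R where
  carrier := {z | z * c ∈ A}
  zero_mem' := by simp
  add_mem' := by
    intro a b ha hb
    simpa [add_mul] using add_mem ha hb
  smul_mem' := by
    intro r x hx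
    simp only [smul_eq_mul, Set.mem_setOf_eq, mul_assoc]
    exact Ideal.mul_mem_left _ _ hx

lemma mem_colI {A : Ideal R} {c z : R} : z ∈ colI A c ↔ z * c ∈ A := Iff.rfl

/-- union of the colon chain `(A : x^k)`. -/
def colUnion (A : Ideal R) (x : R) : Ideal R where
  carrier := {z | ∃ k : ℕ, z * x ^ k ∈ A}
  zero_mem' := ⟨0, by simp⟩
  add_mem' := by
    rintro a b ⟨k, hk⟩ ⟨l, hl⟩
    refine ⟨k + l, ?_⟩
    have : (a + b) * x ^ (k + l) = x ^ l * (a * x ^ k) + x ^ k * (b * x ^ l) := by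
      rw [pow_add]; ring
    rw [this]
    exact add_mem (Ideal.mul_mem_left _ _ hk) (Ideal.mul_mem_left _ _ hl)
  smul_mem' := by
    rintro c z ⟨k, hk⟩
    refine ⟨k, ?_⟩
    rw [smul_eq_mul, mul_assoc]
    exact Ideal.mul_mem_left _ _ hk

lemma mem_colUnion {A : Ideal R} {x z : R} : z ∈ colUnion A x ↔ ∃ k : ℕ, z * x ^ k ∈ A := Iff.rfl

/-- union of a monotone chain of ideals. -/
def uIdeal (g : ℕ → Ideal R) (hg : Monotone g) : Ideal R where
  carrier := {z | ∃ k, z ∈ g k}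
  zero_mem' := ⟨0, (g 0).zero_mem⟩
  add_mem' := by
    rintro a b ⟨k, hk⟩ ⟨l, hl⟩
    exact ⟨max k l, add_mem (hg (le_max_left k l) hk) (hg (le_max_right k l) hl)⟩
  smul_mem' := by
    rintro c x ⟨k, hk⟩
    exact ⟨k, (g k).smul_mem c hk⟩

lemma mem_uIdeal {g : ℕ → Ideal R} {hg : Monotone g} {z : R} :
    z ∈ uIdeal g hg ↔ ∃ k, z ∈ g k := Iff.rfl

section Sat

variable {S : Set R} (hS1 : (1:R) ∈ S) (hSmul : ∀ s ∈ S, ∀ t ∈ S, s * t ∈ S)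

/-- Saturation of an ideal with respect to `S`. -/
def sat (I : Ideal R) : Ideal R where
  carrier := {x | ∃ s ∈ S, s * x ∈ I}
  zero_mem' := ⟨1, hS1, by simpa using I.zero_mem⟩
  add_mem' := by
    rintro a b ⟨s, hs, ha⟩ ⟨t, ht, hb⟩
    refine ⟨s * t, hSmul s hs t ht, ?_⟩
    have h1 : s * t * (a + b) = t * (s * a) + s * (t * b) := by ring
    rw [h1]
    exact add_mem (Ideal.mul_mem_left _ _ ha) (Ideal.mul_mem_left _ _ hb)
  smul_mem' := by
    rintro c x ⟨s, hs, hx⟩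
    refine ⟨s, hs, ?_⟩
    have h1 : s * (c • x) = c * (s * x) := by simp only [smul_eq_mul]; ring
    rw [h1]
    exact Ideal.mul_mem_left _ _ hx

lemma mem_sat {I : Ideal R} {x : R} : x ∈ sat hS1 hSmul I ↔ ∃ s ∈ S, s * x ∈ I := Iff.rfl

lemma le_sat (I : Ideal R) : I ≤ sat hS1 hSmul I :=
  fun x hx => ⟨1, hS1, by simpa using hx⟩

lemma sat_sat (I : Ideal R) : sat hS1 hSmul (sat hS1 hSmul I) = sat hS1 hSmul I := by
  refine le_antisymm ?_ (le_sat hS1 hSmul _)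
  rintro x ⟨s, hs, hsx⟩
  obtain ⟨t, ht, h⟩ := hsx
  refine ⟨t * s, hSmul t ht s hs, ?_⟩
  have : t * s * x = t * (s * x) := by ring
  rw [this]; exact h

lemma isK_sat {I : Ideal R} (hI : IsK I) : IsK (sat hS1 hSmul I) := by
  rintro a b ⟨s, hs, hab⟩ ⟨t, ht, ha⟩
  refine ⟨t * s, hSmul t ht s hs, ?_⟩
  have h1 : t * (s * (a + b)) = (t * s) * a + (t * s) * b := by ring
  have h2 : (t * s) * a + (t * s) * b ∈ I := by
    rw [← h1]; exact Ideal.mul_mem_left _ _ hab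
  have h3 : (t * s) * a ∈ I := by
    have : t * s * a = s * (t * a) := by ring
    rw [this]; exact Ideal.mul_mem_left _ _ ha
  exact hI _ _ h2 h3

lemma one_mem_of_mem_S {A : Ideal R} (hA : sat hS1 hSmul A = A) {t : R} (ht : t ∈ S)
    (htA : t ∈ A) : (1 : R) ∈ A := by
  rw [← hA]; exact ⟨t, ht, by simpa using htA⟩

lemma exists_colon_stab
    (hNoeth : ∀ I : Ideal R, ∃ s ∈ S, ∃ J : Ideal R, J.FG ∧ (∀ x ∈ I, s * x ∈ J) ∧ J ≤ I) {A : Ideal R} (hA : sat hS1 hSmul A = A) (x : R) :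
    ∃ n : ℕ, 1 ≤ n ∧ ∀ m : ℕ, ∀ z : R, z * x ^ m ∈ A → z * x ^ n ∈ A := by
  classical
  obtain ⟨s, hs, J, ⟨G, hG⟩, hsU, hJU⟩ := hNoeth (colUnion A x)
  have hgU : ∀ g ∈ G, ∃ k : ℕ, g * x ^ k ∈ A := by
    intro g hg
    exact hJU (hG ▸ Ideal.subset_span hg)
  choose k hk using hgU
  set N := G.attach.sup (fun g => k g.1 g.2) with hN
  have mono : ∀ (z : R) (a b : ℕ), a ≤ b → z * x ^ a ∈ A → z * x ^ b ∈ A := by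
    intro z a b hab h
    have hb : b = (b - a) + a := (Nat.sub_add_cancel hab).symm
    rw [hb, pow_add, show z * (x ^ (b - a) * x ^ a) = x ^ (b - a) * (z * x ^ a) by ring]
    exact Ideal.mul_mem_left _ _ h
  have hJN : ∀ z ∈ J, z * x ^ N ∈ A := by
    intro z hz
    have hle : J ≤ colI A (x ^ N) := by
      rw [← hG]
      refine Ideal.span_le.mpr fun g hg => ?_
      have h1 : k g hg ≤ N := by
        rw [hN]
        exact Finset.le_sup (f := fun g : {y // y ∈ G} => k g.1 g.2)
          (Finset.mem_attach G ⟨g, hg⟩)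
      exact mono g _ _ h1 (hk g hg)
    exact hle hz
  refine ⟨N + 1, Nat.le_add_left 1 N, fun m z hz => ?_⟩
  have hzU : z ∈ colUnion A x := ⟨m, hz⟩
  have h2 : (s * z) * x ^ N ∈ A := hJN _ (hsU z hzU)
  have h3 : z * x ^ N ∈ sat hS1 hSmul A :=
    ⟨s, hs, by rw [show s * (z * x ^ N) = s * z * x ^ N by ring]; exact h2⟩
  rw [hA] at h3
  rw [pow_succ, show z * (x ^ N * x) = (z * x ^ N) * x by ring]
  exact Ideal.mul_mem_right _ _ h3

lemma exists_s_sat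
    (hNoeth : ∀ I : Ideal R, ∃ s ∈ S, ∃ J : Ideal R, J.FG ∧ (∀ x ∈ I, s * x ∈ J) ∧ J ≤ I)
    (I : Ideal R) :
    ∃ s ∈ S, ∀ a ∈ sat hS1 hSmul I, s * a ∈ I := by
  classical
  obtain ⟨s, hs, J, ⟨G, hG⟩, hsI, hJI⟩ := hNoeth (sat hS1 hSmul I)
  have hgs : ∀ g ∈ G, ∃ t ∈ S, t * g ∈ I := by
    intro g hg
    exact hJI (hG ▸ Ideal.subset_span hg)
  choose t ht1 ht2 using hgs
  set T : R := ∏ g ∈ G.attach, t g.1 g.2 with hT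
  have hTS : T ∈ S := by
    rw [hT]
    exact Finset.prod_induction _ (· ∈ S) (fun a b ha hb => hSmul a ha b hb) hS1
      (fun g _ => ht1 g.1 g.2)
  have hTg : ∀ g (hg : g ∈ G), T * g ∈ I := by
    intro g hg
    have h1 : T = t g hg * ∏ h ∈ G.attach.erase ⟨g, hg⟩, t h.1 h.2 := by
      rw [hT, ← Finset.mul_prod_erase G.attach _ (Finset.mem_attach G ⟨g, hg⟩)]
    rw [h1, show (t g hg * ∏ h ∈ G.attach.erase ⟨g, hg⟩, t h.1 h.2) * g
        = (∏ h ∈ G.attach.erase ⟨g, hg⟩, t h.1 h.2) * (t g hg * g) by ring]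
    exact Ideal.mul_mem_left _ _ (ht2 g hg)
  have hJ : ∀ z ∈ J, T * z ∈ I := by
    intro z hz
    have hle : J ≤ colI I T := by
      rw [← hG]
      exact Ideal.span_le.mpr fun g hg => show g * T ∈ I by
        rw [mul_comm]; exact hTg g hg
    have h4 : z * T ∈ I := hle hz
    rwa [mul_comm] at h4
  refine ⟨T * s, hSmul T hTS s hs, fun a ha => ?_⟩
  have h2 : T * (s * a) ∈ I := hJ _ (hsI a ha)
  rwa [← mul_assoc] at h2

end Sat

section Main

variable {S : Set R} (hS1 : (1:R) ∈ S) (hSmul : ∀ s ∈ S, ∀ t ∈ S, s * t ∈ S)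

/-- Normal form for membership in `cl (mix I s2 B)`. -/
lemma nf (hcanc : ∀ a b c : R, a + b = a + c → b = c)
    (hyoked : ∀ a b : R, ∃ c : R, a + c = b ∨ b + c = a)
    {I B : Ideal R} (hBk : IsK B) {s2 x : R} (hx : x ∈ cl (mix I s2 B)) :
    ∃ i ∈ I, ∃ j ∈ I, ∃ β ∈ B, (x + i = j + s2 * β ∨ x + i + s2 * β = j) := by
  obtain ⟨u, hu, v, hv, h⟩ := mem_cl.mp hx
  obtain ⟨i₁, hi₁, b₁, hb₁, rfl⟩ := mem_mix.mp hu
  obtain ⟨i₂, hi₂, b₂, hb₂, rfl⟩ := mem_mix.mp hv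
  obtain ⟨c, hc | hc⟩ := hyoked b₁ b₂
  · have hcB : c ∈ B := hBk b₁ c (by rw [hc]; exact hb₂) hb₁
    refine ⟨i₁, hi₁, i₂, hi₂, c, hcB, Or.inl ?_⟩
    apply hcanc (s2 * b₁)
    calc s2 * b₁ + (x + i₁) = x + (i₁ + s2 * b₁) := by ring
      _ = i₂ + s2 * b₂ := h
      _ = i₂ + s2 * (b₁ + c) := by rw [hc]
      _ = s2 * b₁ + (i₂ + s2 * c) := by ring
  · have hcB : c ∈ B := hBk b₂ c (by rw [hc]; exact hb₁) hb₂
    refine ⟨i₁, hi₁, i₂, hi₂, c, hcB, Or.inr ?_⟩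
    apply hcanc (s2 * b₂)
    calc s2 * b₂ + (x + i₁ + s2 * c) = x + (i₁ + s2 * (b₂ + c)) := by ring
      _ = x + (i₁ + s2 * b₁) := by rw [hc]
      _ = i₂ + s2 * b₂ := h
      _ = s2 * b₂ + i₂ := by ring

lemma sat_cl_mix {I B : Ideal R} (hBsat : sat hS1 hSmul B = B) (hBk : IsK B)
    (hIB : I ≤ B) {s : R} (hs : s ∈ S) :
    sat hS1 hSmul (cl (mix I (s * s) B)) = B := by
  apply le_antisymm
  · intro x hx0
    obtain ⟨t, ht, hx⟩ := (mem_sat hS1 hSmul).mp hx0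
    obtain ⟨u, hu, v, hv, h⟩ := mem_cl.mp hx
    obtain ⟨i₁, hi₁, b₁, hb₁, rfl⟩ := mem_mix.mp hu
    obtain ⟨i₂, hi₂, b₂, hb₂, rfl⟩ := mem_mix.mp hv
    have h1 : i₂ + s * s * b₂ ∈ B := add_mem (hIB hi₂) (Ideal.mul_mem_left _ _ hb₂)
    have h2 : i₁ + s * s * b₁ ∈ B := add_mem (hIB hi₁) (Ideal.mul_mem_left _ _ hb₁)
    have h3 : t * x ∈ B := hBk _ _
      (by rw [show (i₁ + s*s*b₁) + t*x = t*x + (i₁ + s*s*b₁) by ring, h]; exact h1) h2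
    rw [← hBsat]
    exact ⟨t, ht, h3⟩
  · intro b hb
    exact ⟨s * s, hSmul s hs s hs, le_cl _ (mem_mix.mpr ⟨0, I.zero_mem, b, hb, by rw [zero_add]⟩)⟩

lemma split_eq (hcanc : ∀ a b c : R, a + b = a + c → b = c)
    (hyoked : ∀ a b : R, ∃ c : R, a + c = b ∨ b + c = a)
    {I B C : Ideal R} (hIk : IsK I)
    (hBsat : sat hS1 hSmul B = B) (hBk : IsK B)
    (hCsat : sat hS1 hSmul C = C) (hCk : IsK C)
    (hIB : I ≤ B) (hIC : I ≤ C)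
    {s : R} (hs : s ∈ S) (hsBC : ∀ a, a ∈ B → a ∈ C → s * a ∈ I) :
    I = cl (mix I (s * s) B) ⊓ cl (mix I (s * s) C) := by
  apply le_antisymm
  · exact le_inf ((le_mix I _ B).trans (le_cl _)) ((le_mix I _ C).trans (le_cl _))
  · intro x hx
    rw [Submodule.mem_inf] at hx
    obtain ⟨hxB, hxC⟩ := hx
    obtain ⟨i₁, hi₁, i₂, hi₂, β, hβ, hcase₁⟩ := nf hcanc hyoked hBk hxB
    obtain ⟨i₃, hi₃, i₄, hi₄, γ, hγ, hcase₂⟩ := nf hcanc hyoked hCk hxC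
    have upB : ∀ w : R, s * s * w ∈ B → s * w ∈ B := by
      intro w hw
      rw [← hBsat]
      exact ⟨s, hs, by rw [show s * (s * w) = s * s * w by ring]; exact hw⟩
    have upC : ∀ w : R, s * s * w ∈ C → s * w ∈ C := by
      intro w hw
      rw [← hCsat]
      exact ⟨s, hs, by rw [show s * (s * w) = s * s * w by ring]; exact hw⟩
    rcases hcase₁ with h₁ | h₁ <;> rcases hcase₂ with h₂ | h₂
    · -- case (a)
      have hstar : i₂ + s*s*β + i₃ = i₄ + s*s*γ + i₁ := by rw [← h₁, ← h₂]; ring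
      obtain ⟨δ, hδ | hδ⟩ := hyoked (s*s*β) (s*s*γ)
      · have h5 : i₂ + i₃ = i₄ + i₁ + δ := by
          apply hcanc (s*s*β)
          calc s*s*β + (i₂ + i₃) = i₂ + s*s*β + i₃ := by ring
            _ = i₄ + s*s*γ + i₁ := hstar
            _ = i₄ + (s*s*β + δ) + i₁ := by rw [hδ]
            _ = s*s*β + (i₄ + i₁ + δ) := by ring
        have hδI : δ ∈ I := hIk (i₄ + i₁) δ (by rw [← h5]; exact add_mem hi₂ hi₃)
          (add_mem hi₄ hi₁)
        have h6 : s*s*β ∈ C := hCk δ (s*s*β)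
          (by rw [show δ + s*s*β = s*s*β + δ by ring, hδ]; exact Ideal.mul_mem_left _ _ hγ)
          (hIC hδI)
        have h9 : s*s*β ∈ I := by
          rw [show s*s*β = s*(s*β) by ring]
          exact hsBC (s*β) (Ideal.mul_mem_left _ _ hβ) (upC β h6)
        exact hIk i₁ x (by rw [show i₁ + x = x + i₁ by ring, h₁]; exact add_mem hi₂ h9) hi₁
      · have h5 : i₂ + i₃ + δ = i₄ + i₁ := by
          apply hcanc (s*s*γ)
          calc s*s*γ + (i₂ + i₃ + δ) = i₂ + (s*s*γ + δ) + i₃ := by ring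
            _ = i₂ + s*s*β + i₃ := by rw [hδ]
            _ = i₄ + s*s*γ + i₁ := hstar
            _ = s*s*γ + (i₄ + i₁) := by ring
        have hδI : δ ∈ I := hIk (i₂ + i₃) δ (by rw [h5]; exact add_mem hi₄ hi₁)
          (add_mem hi₂ hi₃)
        have h6 : s*s*γ ∈ B := hBk δ (s*s*γ)
          (by rw [show δ + s*s*γ = s*s*γ + δ by ring, hδ]; exact Ideal.mul_mem_left _ _ hβ)
          (hIB hδI)
        have h9 : s*s*γ ∈ I := by
          rw [show s*s*γ = s*(s*γ) by ring]
          exact hsBC (s*γ) (upB γ h6) (Ideal.mul_mem_left _ _ hγ)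
        exact hIk i₃ x (by rw [show i₃ + x = x + i₃ by ring, h₂]; exact add_mem hi₄ h9) hi₃
    · -- case (b)
      have h5 : i₂ + s*s*β + i₃ + s*s*γ = i₄ + i₁ := by rw [← h₁, ← h₂]; ring
      have hsum : s*s*β + s*s*γ ∈ I := by
        refine hIk (i₂ + i₃) _ ?_ (add_mem hi₂ hi₃)
        rw [show i₂ + i₃ + (s*s*β + s*s*γ) = i₂ + s*s*β + i₃ + s*s*γ by ring, h5]
        exact add_mem hi₄ hi₁
      have h7 : s*s*β ∈ C := hCk (s*s*γ) (s*s*β)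
        (by rw [show s*s*γ + s*s*β = s*s*β + s*s*γ by ring]; exact hIC hsum)
        (Ideal.mul_mem_left _ _ hγ)
      have h9 : s*s*β ∈ I := by
        rw [show s*s*β = s*(s*β) by ring]
        exact hsBC (s*β) (Ideal.mul_mem_left _ _ hβ) (upC β h7)
      exact hIk i₁ x (by rw [show i₁ + x = x + i₁ by ring, h₁]; exact add_mem hi₂ h9) hi₁
    · -- case (c)
      have h5 : i₄ + s*s*γ + i₁ + s*s*β = i₂ + i₃ := by rw [← h₂, ← h₁]; ring
      have hsum : s*s*γ + s*s*β ∈ I := by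
        refine hIk (i₄ + i₁) _ ?_ (add_mem hi₄ hi₁)
        rw [show i₄ + i₁ + (s*s*γ + s*s*β) = i₄ + s*s*γ + i₁ + s*s*β by ring, h5]
        exact add_mem hi₂ hi₃
      have h7 : s*s*γ ∈ B := hBk (s*s*β) (s*s*γ)
        (by rw [show s*s*β + s*s*γ = s*s*γ + s*s*β by ring]; exact hIB hsum)
        (Ideal.mul_mem_left _ _ hβ)
      have h9 : s*s*γ ∈ I := by
        rw [show s*s*γ = s*(s*γ) by ring]
        exact hsBC (s*γ) (upB γ h7) (Ideal.mul_mem_left _ _ hγ)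
      exact hIk i₃ x (by rw [show i₃ + x = x + i₃ by ring, h₂]; exact add_mem hi₄ h9) hi₃
    · -- case (d)
      have hstar : i₂ + i₃ + s*s*γ = i₄ + i₁ + s*s*β := by rw [← h₁, ← h₂]; ring
      obtain ⟨δ, hδ | hδ⟩ := hyoked (s*s*β) (s*s*γ)
      · have h5 : i₂ + i₃ + δ = i₄ + i₁ := by
          apply hcanc (s*s*β)
          calc s*s*β + (i₂ + i₃ + δ) = i₂ + i₃ + (s*s*β + δ) := by ring
            _ = i₂ + i₃ + s*s*γ := by rw [hδ]
            _ = i₄ + i₁ + s*s*β := hstar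
            _ = s*s*β + (i₄ + i₁) := by ring
        have hδI : δ ∈ I := hIk (i₂ + i₃) δ (by rw [h5]; exact add_mem hi₄ hi₁)
          (add_mem hi₂ hi₃)
        have h6 : s*s*β ∈ C := hCk δ (s*s*β)
          (by rw [show δ + s*s*β = s*s*β + δ by ring, hδ]; exact Ideal.mul_mem_left _ _ hγ)
          (hIC hδI)
        have h9 : s*s*β ∈ I := by
          rw [show s*s*β = s*(s*β) by ring]
          exact hsBC (s*β) (Ideal.mul_mem_left _ _ hβ) (upC β h6)
        exact hIk (i₁ + s*s*β) x
          (by rw [show i₁ + s*s*β + x = x + i₁ + s*s*β by ring, h₁]; exact hi₂)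
          (add_mem hi₁ h9)
      · have h5 : i₂ + i₃ = i₄ + i₁ + δ := by
          apply hcanc (s*s*γ)
          calc s*s*γ + (i₂ + i₃) = i₂ + i₃ + s*s*γ := by ring
            _ = i₄ + i₁ + s*s*β := hstar
            _ = i₄ + i₁ + (s*s*γ + δ) := by rw [hδ]
            _ = s*s*γ + (i₄ + i₁ + δ) := by ring
        have hδI : δ ∈ I := hIk (i₄ + i₁) δ (by rw [← h5]; exact add_mem hi₂ hi₃)
          (add_mem hi₄ hi₁)
        have h6 : s*s*γ ∈ B := hBk δ (s*s*γ)
          (by rw [show δ + s*s*γ = s*s*γ + δ by ring, hδ]; exact Ideal.mul_mem_left _ _ hβ)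
          (hIB hδI)
        have h9γ : s*s*γ ∈ I := by
          rw [show s*s*γ = s*(s*γ) by ring]
          exact hsBC (s*γ) (upB γ h6) (Ideal.mul_mem_left _ _ hγ)
        have h9 : s*s*β ∈ I := by rw [← hδ]; exact add_mem h9γ hδI
        exact hIk (i₁ + s*s*β) x
          (by rw [show i₁ + s*s*β + x = x + i₁ + s*s*β by ring, h₁]; exact hi₂)
          (add_mem hi₁ h9)

lemma wf_sat
    (hNoeth : ∀ I : Ideal R, ∃ s ∈ S, ∃ J : Ideal R, J.FG ∧ (∀ x ∈ I, s * x ∈ J) ∧ J ≤ I) :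
    WellFounded ((· > ·) : {A : Ideal R // sat hS1 hSmul A = A} →
      {A : Ideal R // sat hS1 hSmul A = A} → Prop) := by
  classical
  refine (wellFoundedGT_iff_monotone_chain_condition.mpr ?_).wf
  intro f
  have hmono : Monotone (fun k => (f k).1) := fun a b hab => Subtype.coe_le_coe.mpr (f.mono hab)
  obtain ⟨s, hs, J, ⟨G, hG⟩, hsU, hJU⟩ := hNoeth (uIdeal _ hmono)
  have hgU : ∀ g ∈ G, ∃ k, g ∈ (f k).1 := fun g hg => hJU (hG ▸ Ideal.subset_span hg)
  choose k hk using hgU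
  set N := G.attach.sup (fun g => k g.1 g.2) with hN
  have hJN : J ≤ (f N).1 := by
    rw [← hG]
    refine Ideal.span_le.mpr fun g hg => ?_
    refine hmono ?_ (hk g hg)
    rw [hN]
    exact Finset.le_sup (f := fun g : {y // y ∈ G} => k g.1 g.2) (Finset.mem_attach G ⟨g, hg⟩)
  refine ⟨N, fun m hm => ?_⟩
  refine le_antisymm (f.mono hm) ?_
  rw [← Subtype.coe_le_coe]
  intro z hz
  have h1 : s * z ∈ J := hsU z (mem_uIdeal.mpr ⟨m, hz⟩)
  have h3 : z ∈ sat hS1 hSmul (f N).1 := ⟨s, hs, hJN h1⟩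
  rwa [(f N).2] at h3

lemma primary_of_irred (hcanc : ∀ a b c : R, a + b = a + c → b = c)
    (hyoked : ∀ a b : R, ∃ c : R, a + c = b ∨ b + c = a)
    (hNoeth : ∀ I : Ideal R, ∃ s ∈ S, ∃ J : Ideal R, J.FG ∧ (∀ x ∈ I, s * x ∈ J) ∧ J ≤ I)
    {A : Ideal R} (hAsat : sat hS1 hSmul A = A) (hAk : IsK A)
    (hirr : ∀ B C : Ideal R, sat hS1 hSmul B = B → IsK B → sat hS1 hSmul C = C → IsK C →
      A = B ⊓ C → A = B ∨ A = C) :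
    ∀ x y : R, x * y ∈ A → x ∈ A ∨ y ∈ A.radical := by
  intro x y hxy
  by_cases hx : x ∈ A
  · exact Or.inl hx
  right
  obtain ⟨n, hn1, hstab⟩ := exists_colon_stab hS1 hSmul hNoeth hAsat y
  set B := sat hS1 hSmul (cl (mix A 1 (Ideal.span {y ^ n}))) with hBdef
  set C := colI A (y ^ n) with hCdef
  have hBsat : sat hS1 hSmul B = B := sat_sat hS1 hSmul _
  have hBk : IsK B := isK_sat hS1 hSmul (isK_cl hcanc _)
  have hCsat : sat hS1 hSmul C = C := by
    refine le_antisymm ?_ (le_sat hS1 hSmul _)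
    intro z hz0
    obtain ⟨t, ht, hz⟩ := (mem_sat hS1 hSmul).mp hz0
    have hz' : (t * z) * y ^ n ∈ A := mem_colI.mp hz
    show z * y ^ n ∈ A
    rw [← hAsat]
    exact ⟨t, ht, by rw [show t * (z * y ^ n) = t * z * y ^ n by ring]; exact hz'⟩
  have hCk : IsK C := by
    intro a b hab ha
    show b * y ^ n ∈ A
    exact hAk (a * y ^ n) (b * y ^ n)
      (by rw [← add_mul]; exact mem_colI.mp hab) (mem_colI.mp ha)
  have hkey : A = B ⊓ C := by
    apply le_antisymm
    · refine le_inf ?_ ?_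
      · exact ((le_mix A 1 _).trans (le_cl _)).trans (le_sat hS1 hSmul _)
      · intro a ha
        exact mem_colI.mpr (Ideal.mul_mem_right _ _ ha)
    · intro z hz
      rw [Submodule.mem_inf] at hz
      obtain ⟨hzB, hzC0⟩ := hz
      have hzC : z * y ^ n ∈ A := mem_colI.mp hzC0
      obtain ⟨t, ht, htz⟩ := (mem_sat hS1 hSmul).mp hzB
      obtain ⟨u, hu, v, hv, h⟩ := mem_cl.mp htz
      obtain ⟨a₁, ha₁, b₁, hb₁, rfl⟩ := mem_mix.mp hu
      obtain ⟨a₂, ha₂, b₂, hb₂, rfl⟩ := mem_mix.mp hv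
      obtain ⟨r₁, hr₁⟩ := Ideal.mem_span_singleton'.mp hb₁
      obtain ⟨r₂, hr₂⟩ := Ideal.mem_span_singleton'.mp hb₂
      subst hr₁
      subst hr₂
      have htzy : t * (z * y ^ n) ∈ A := Ideal.mul_mem_left _ _ hzC
      obtain ⟨c, hc | hc⟩ := hyoked r₁ r₂
      · have h1 : t * z + a₁ = a₂ + c * y ^ n := by
          apply hcanc (r₁ * y ^ n)
          calc r₁ * y ^ n + (t * z + a₁) = t * z + (a₁ + 1 * (r₁ * y ^ n)) := by ring
            _ = a₂ + 1 * (r₂ * y ^ n) := h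
            _ = a₂ + 1 * ((r₁ + c) * y ^ n) := by rw [← hc]
            _ = r₁ * y ^ n + (a₂ + c * y ^ n) := by ring
        have h4 : t * (z * y ^ n) + a₁ * y ^ n ∈ A :=
          add_mem htzy (Ideal.mul_mem_right _ _ ha₁)
        have hc2 : c * (y ^ n * y ^ n) ∈ A := by
          refine hAk (a₂ * y ^ n) _ ?_ (Ideal.mul_mem_right _ _ ha₂)
          have h5 : a₂ * y ^ n + c * (y ^ n * y ^ n) = t * (z * y ^ n) + a₁ * y ^ n := by
            calc a₂ * y ^ n + c * (y ^ n * y ^ n) = (a₂ + c * y ^ n) * y ^ n := by ring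
              _ = (t * z + a₁) * y ^ n := by rw [h1]
              _ = t * (z * y ^ n) + a₁ * y ^ n := by ring
          rw [h5]
          exact h4
        have h6 : c * y ^ n ∈ A := by
          refine hstab (n + n) c ?_
          rw [pow_add]
          exact hc2
        have h7 : t * z ∈ A := by
          refine hAk a₁ (t * z) ?_ ha₁
          rw [show a₁ + t * z = t * z + a₁ by ring, h1]
          exact add_mem ha₂ h6
        show z ∈ A
        rw [← hAsat]
        exact ⟨t, ht, h7⟩
      · have h1 : t * z + a₁ + c * y ^ n = a₂ := by
          apply hcanc (r₂ * y ^ n)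
          calc r₂ * y ^ n + (t * z + a₁ + c * y ^ n)
              = t * z + (a₁ + 1 * ((r₂ + c) * y ^ n)) := by ring
            _ = t * z + (a₁ + 1 * (r₁ * y ^ n)) := by rw [hc]
            _ = a₂ + 1 * (r₂ * y ^ n) := h
            _ = r₂ * y ^ n + a₂ := by ring
        have h4 : t * (z * y ^ n) + a₁ * y ^ n ∈ A :=
          add_mem htzy (Ideal.mul_mem_right _ _ ha₁)
        have hc2 : c * (y ^ n * y ^ n) ∈ A := by
          refine hAk (t * (z * y ^ n) + a₁ * y ^ n) _ ?_ h4
          have h5 : t * (z * y ^ n) + a₁ * y ^ n + c * (y ^ n * y ^ n)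
              = (t * z + a₁ + c * y ^ n) * y ^ n := by ring
          rw [h5, h1]
          exact Ideal.mul_mem_right _ _ ha₂
        have h6 : c * y ^ n ∈ A := by
          refine hstab (n + n) c ?_
          rw [pow_add]
          exact hc2
        have h7 : t * z ∈ A := by
          refine hAk (a₁ + c * y ^ n) (t * z) ?_ (add_mem ha₁ h6)
          rw [show a₁ + c * y ^ n + t * z = t * z + a₁ + c * y ^ n by ring, h1]
          exact ha₂
        show z ∈ A
        rw [← hAsat]
        exact ⟨t, ht, h7⟩
  rcases hirr B C hBsat hBk hCsat hCk hkey with hAB | hAC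
  · have hyB : y ^ n ∈ B :=
      le_sat hS1 hSmul _ (le_cl _ (mem_mix.mpr
        ⟨0, A.zero_mem, y ^ n, Ideal.subset_span rfl, by rw [zero_add, one_mul]⟩))
    exact ⟨n, by rw [hAB]; exact hyB⟩
  · exfalso
    apply hx
    have hxC : x ∈ C := by
      refine mem_colI.mpr ?_
      have hxyn : x * y ^ n = x * y * y ^ (n - 1) := by
        rw [show x * y * y ^ (n-1) = x * (y * y ^ (n-1)) by ring, ← pow_succ']
        congr 2
        omega
      rw [hxyn]
      exact Ideal.mul_mem_right _ _ hxy
    rw [hAC]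
    exact hxC

end Main

lemma iInf_addCases {α : Type*} [CompleteLattice α] {m n : ℕ} (f : Fin m → α) (g : Fin n → α) :
    (⨅ i : Fin (m + n), Fin.addCases (motive := fun _ => α) f g i) = (⨅ i, f i) ⊓ (⨅ j, g j) := by
  apply le_antisymm
  · refine le_inf (le_iInf fun j => ?_) (le_iInf fun j => ?_)
    · refine iInf_le_of_le (Fin.castAdd n j) ?_
      simp
    · refine iInf_le_of_le (Fin.natAdd m j) ?_
      simp
  · refine le_iInf fun i => ?_
    refine Fin.addCases (fun j => ?_) (fun j => ?_) i
    · simp only [Fin.addCases_left]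
      exact inf_le_left.trans (iInf_le f j)
    · simp only [Fin.addCases_right]
      exact inf_le_right.trans (iInf_le g j)

end SKP

/-- Existence of S-k-primary decompositions: in an additively cancellative,
zerosumfree, yoked, commutative S-Noetherian semiring, every proper k-ideal disjoint
from S is a finite intersection of S-primary k-ideals disjoint from S. -/
theorem exists_S_k_primary_decomposition {R : Type*} [CommSemiring R]
    (hcanc : ∀ a b c : R, a + b = a + c → b = c)
    (hzsf : ∀ a b : R, a + b = 0 → a = 0 ∧ b = 0)
    (hyoked : ∀ a b : R, ∃ c : R, a + c = b ∨ b + c = a)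
    (S : Set R) (hS1 : (1 : R) ∈ S) (hSmul : ∀ s ∈ S, ∀ t ∈ S, s * t ∈ S)
    (hNoeth : ∀ I : Ideal R, ∃ s ∈ S, ∃ J : Ideal R, J.FG ∧ (∀ x ∈ I, s * x ∈ J) ∧ J ≤ I)
    (I : Ideal R) (hIproper : I ≠ ⊤) (hIS : Disjoint S (I : Set R))
    (hIk : ∀ a b : R, a + b ∈ I → a ∈ I → b ∈ I) :
    ∃ (n : ℕ) (A : Fin n → Ideal R),
      (∀ i, Disjoint S ((A i : Set R))) ∧
      (∀ i, ∀ a b : R, a + b ∈ A i → a ∈ A i → b ∈ A i) ∧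
      (∀ i, ∃ s ∈ S, ∀ a b : R,
        a * b ∈ A i → s * a ∈ A i ∨ s * b ∈ (A i).radical) ∧
      I = ⨅ i, A i := by
  classical
  have hdisj : ∀ x ∈ S, x ∉ I := fun x hx => Set.disjoint_left.mp hIS hx
  have wf := SKP.wf_sat hS1 hSmul hNoeth
  let P : {A : Ideal R // SKP.sat hS1 hSmul A = A} → Prop := fun A =>
    ∀ I' : Ideal R, SKP.IsK I' → (∀ x ∈ S, x ∉ I') → SKP.sat hS1 hSmul I' = A.1 →
      ∃ (n : ℕ) (f : Fin n → Ideal R), (∀ i, ∀ x ∈ S, x ∉ f i) ∧ (∀ i, SKP.IsK (f i)) ∧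
        (∀ i, ∃ s ∈ S, ∀ a b : R, a * b ∈ f i → s * a ∈ f i ∨ s * b ∈ (f i).radical) ∧
        I' = ⨅ i, f i
  have hP : ∀ A, P A := by
    intro A0
    refine wf.induction A0 ?_
    intro A IH I' hI'k hI'disj hI'sat
    by_cases hirr : ∀ B C : Ideal R, SKP.sat hS1 hSmul B = B → SKP.IsK B →
        SKP.sat hS1 hSmul C = C → SKP.IsK C → A.1 = B ⊓ C → A.1 = B ∨ A.1 = C
    · -- A is meet-irreducible: I' is itself S-primary
      obtain ⟨s, hs, hsSat⟩ := SKP.exists_s_sat hS1 hSmul hNoeth I'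
      rw [hI'sat] at hsSat
      have hAk : SKP.IsK A.1 := hI'sat ▸ SKP.isK_sat hS1 hSmul hI'k
      have hprim := SKP.primary_of_irred hS1 hSmul hcanc hyoked hNoeth A.2 hAk hirr
      refine ⟨1, fun _ => I', fun _ => hI'disj, fun _ => hI'k, fun _ => ⟨s, hs, ?_⟩, ?_⟩
      · intro a b hab
        have habA : a * b ∈ A.1 := by
          rw [← hI'sat]; exact SKP.le_sat hS1 hSmul I' hab
        rcases hprim a b habA with ha | hb
        · exact Or.inl (hsSat a ha)
        · right
          obtain ⟨m, hm⟩ := Ideal.mem_radical_iff.mp hb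
          rcases Nat.eq_zero_or_pos m with rfl | hm1
          · exfalso
            have h1A : (1:R) ∈ A.1 := by simpa using hm
            exact hI'disj s hs (by simpa using hsSat 1 h1A)
          · obtain ⟨m', rfl⟩ : ∃ m', m = m' + 1 := ⟨m - 1, by omega⟩
            refine Ideal.mem_radical_iff.mpr ⟨m' + 1, ?_⟩
            have h1 : s * b ^ (m' + 1) ∈ I' := hsSat _ hm
            rw [show (s * b) ^ (m' + 1) = s ^ m' * (s * b ^ (m' + 1)) by
              rw [mul_pow, pow_succ]; ring]
            exact Ideal.mul_mem_left _ _ h1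
      · simp
    · -- A splits, recurse
      push_neg at hirr
      obtain ⟨B, C, hBsat, hBk, hCsat, hCk, hABC, hAB, hAC⟩ := hirr
      obtain ⟨s, hs, hsSat⟩ := SKP.exists_s_sat hS1 hSmul hNoeth I'
      rw [hI'sat] at hsSat
      have hI'A : I' ≤ A.1 := by
        rw [← hI'sat]; exact SKP.le_sat hS1 hSmul I'
      have hIB : I' ≤ B := by
        intro z hz
        have h := hI'A hz
        rw [hABC] at h
        exact (Submodule.mem_inf.mp h).1
      have hIC : I' ≤ C := by
        intro z hz
        have h := hI'A hz
        rw [hABC] at h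
        exact (Submodule.mem_inf.mp h).2
      have hsBC : ∀ a, a ∈ B → a ∈ C → s * a ∈ I' := fun a haB haC =>
        hsSat a (by rw [hABC]; exact Submodule.mem_inf.mpr ⟨haB, haC⟩)
      have hsplit := SKP.split_eq hS1 hSmul hcanc hyoked hI'k hBsat hBk hCsat hCk hIB hIC hs hsBC
      have hI₁sat : SKP.sat hS1 hSmul (SKP.cl (SKP.mix I' (s*s) B)) = B :=
        SKP.sat_cl_mix hS1 hSmul hBsat hBk hIB hs
      have hI₂sat : SKP.sat hS1 hSmul (SKP.cl (SKP.mix I' (s*s) C)) = C :=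
        SKP.sat_cl_mix hS1 hSmul hCsat hCk hIC hs
      have hI₁k := SKP.isK_cl hcanc (SKP.mix I' (s*s) B)
      have hI₂k := SKP.isK_cl hcanc (SKP.mix I' (s*s) C)
      have hBne : B ≠ ⊤ := fun h => hAC (by rw [hABC, h, top_inf_eq])
      have hCne : C ≠ ⊤ := fun h => hAB (by rw [hABC, h, inf_top_eq])
      have hI₁disj : ∀ x ∈ S, x ∉ SKP.cl (SKP.mix I' (s*s) B) := by
        intro x hx hxI
        apply hBne
        have h1 : x ∈ B := by rw [← hI₁sat]; exact SKP.le_sat hS1 hSmul _ hxI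
        exact (Ideal.eq_top_iff_one B).mpr (SKP.one_mem_of_mem_S hS1 hSmul hBsat hx h1)
      have hI₂disj : ∀ x ∈ S, x ∉ SKP.cl (SKP.mix I' (s*s) C) := by
        intro x hx hxI
        apply hCne
        have h1 : x ∈ C := by rw [← hI₂sat]; exact SKP.le_sat hS1 hSmul _ hxI
        exact (Ideal.eq_top_iff_one C).mpr (SKP.one_mem_of_mem_S hS1 hSmul hCsat hx h1)
      have hBlt : A < (⟨B, hBsat⟩ : {A : Ideal R // SKP.sat hS1 hSmul A = A}) := by
        rw [← Subtype.coe_lt_coe]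
        exact lt_of_le_of_ne (le_trans (le_of_eq hABC) inf_le_left) hAB
      have hClt : A < (⟨C, hCsat⟩ : {A : Ideal R // SKP.sat hS1 hSmul A = A}) := by
        rw [← Subtype.coe_lt_coe]
        exact lt_of_le_of_ne (le_trans (le_of_eq hABC) inf_le_right) hAC
      obtain ⟨n₁, f₁, hf₁d, hf₁k, hf₁p, hf₁i⟩ := IH ⟨B, hBsat⟩ hBlt _ hI₁k hI₁disj hI₁sat
      obtain ⟨n₂, f₂, hf₂d, hf₂k, hf₂p, hf₂i⟩ := IH ⟨C, hCsat⟩ hClt _ hI₂k hI₂disj hI₂sat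
      refine ⟨n₁ + n₂, Fin.addCases f₁ f₂, ?_, ?_, ?_, ?_⟩
      · intro i
        refine Fin.addCases (fun j => ?_) (fun j => ?_) i
        · simpa [Fin.addCases_left] using hf₁d j
        · simpa [Fin.addCases_right] using hf₂d j
      · intro i
        refine Fin.addCases (fun j => ?_) (fun j => ?_) i
        · simpa [Fin.addCases_left] using hf₁k j
        · simpa [Fin.addCases_right] using hf₂k j
      · intro i
        refine Fin.addCases (fun j => ?_) (fun j => ?_) i
        · simpa [Fin.addCases_left] using hf₁p j
        · simpa [Fin.addCases_right] using hf₂p j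
      · rw [hsplit, hf₁i, hf₂i]
        exact (SKP.iInf_addCases f₁ f₂).symm
  obtain ⟨n, f, hfd, hfk, hfp, hfi⟩ :=
    hP ⟨SKP.sat hS1 hSmul I, SKP.sat_sat hS1 hSmul I⟩ I hIk hdisj rfl
  refine ⟨n, f, fun i => Set.disjoint_left.mpr (hfd i), hfk, hfp, hfi⟩
end

section
/- Let R be a commutative semiring that is additively cancellative, zerosumfree, and yoked, let S be a multiplicative subset of R, and suppose R is S-Noetherian. If I is a proper k-ideal of R disjoint from S satisfying I = √I, then I can be written as a finite intersection I = P₁ ∩ ⋯ ∩ Pₙ of S-prime ideals of R. -/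
namespace SPrimeAux

variable {R : Type*} [CommSemiring R]

/-- The `S`-saturation of an ideal. -/
def satId (S : Submonoid R) (I : Ideal R) : Ideal R where
  carrier := {x | ∃ s ∈ S, s * x ∈ I}
  zero_mem' := ⟨1, S.one_mem, by simp⟩
  add_mem' := by
    rintro a b ⟨s, hs, hsa⟩ ⟨t, ht, htb⟩
    refine ⟨s * t, S.mul_mem hs ht, ?_⟩
    have h : s * t * (a + b) = t * (s * a) + s * (t * b) := by ring
    rw [h]
    exact Ideal.add_mem _ (Ideal.mul_mem_left _ _ hsa) (Ideal.mul_mem_left _ _ htb)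
  smul_mem' := by
    rintro c x ⟨s, hs, hsx⟩
    refine ⟨s, hs, ?_⟩
    have h : s * (c • x) = c * (s * x) := by simp only [smul_eq_mul]; ring
    rw [h]
    exact Ideal.mul_mem_left _ _ hsx

lemma mem_satId {S : Submonoid R} {I : Ideal R} {x : R} :
    x ∈ satId S I ↔ ∃ s ∈ S, s * x ∈ I := Iff.rfl

lemma le_satId (S : Submonoid R) (I : Ideal R) : I ≤ satId S I :=
  fun x hx => ⟨1, S.one_mem, by rwa [one_mul]⟩

lemma satId_satId (S : Submonoid R) (I : Ideal R) : satId S (satId S I) ≤ satId S I := by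
  rintro x ⟨s, hs, t, ht, h⟩
  exact ⟨t * s, S.mul_mem ht hs, by rwa [mul_assoc]⟩

lemma radical_satId (S : Submonoid R) {K : Ideal R} (hK : K.radical ≤ K) :
    (satId S K).radical ≤ satId S K := by
  intro x hx
  obtain ⟨n, s, hs, hsx⟩ := Ideal.mem_radical_iff.1 hx
  cases n with
  | zero =>
    refine ⟨s, hs, ?_⟩
    have h1 : s ∈ K := by simpa using hsx
    simpa using Ideal.mul_mem_right x _ h1
  | succ m =>
    refine ⟨s, hs, hK (Ideal.mem_radical_iff.2 ⟨m + 1, ?_⟩)⟩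
    have h : (s * x) ^ (m + 1) = s ^ m * (s * x ^ (m + 1)) := by ring
    rw [h]
    exact Ideal.mul_mem_left _ _ hsx

lemma foldr_inf_append (l₁ l₂ : List (Ideal R)) :
    (l₁ ++ l₂).foldr (· ⊓ ·) ⊤ = l₁.foldr (· ⊓ ·) ⊤ ⊓ l₂.foldr (· ⊓ ·) ⊤ := by
  induction l₁ with
  | nil => simp
  | cons a l ih => simp [ih, inf_assoc]

lemma foldr_inf_le_of_mem {l : List (Ideal R)} {P : Ideal R} (h : P ∈ l) :
    l.foldr (· ⊓ ·) ⊤ ≤ P := by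
  induction l with
  | nil => simp at h
  | cons a l ih =>
    rcases List.mem_cons.1 h with h | h
    · subst h; exact inf_le_left
    · exact le_trans inf_le_right (ih h)

lemma foldr_prod_le_foldr_inf (l : List (Ideal R)) :
    l.foldr (· * ·) ⊤ ≤ l.foldr (· ⊓ ·) ⊤ := by
  induction l with
  | nil => exact le_rfl
  | cons a l ih => exact le_inf Ideal.mul_le_left (le_trans Ideal.mul_le_right ih)

lemma foldr_inf_eq_iInf (l : List (Ideal R)) :
    l.foldr (· ⊓ ·) ⊤ = ⨅ i : Fin l.length, l.get i := by
  induction l with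
  | nil => exact le_antisymm (le_iInf fun i => i.elim0) le_top
  | cons a l ih =>
    rw [List.foldr_cons, ih]
    apply le_antisymm
    · apply le_iInf
      intro i
      induction i using Fin.cases with
      | zero => exact inf_le_left
      | succ j => exact le_trans inf_le_right (le_trans (iInf_le _ j) (le_of_eq rfl))
    · refine le_inf (le_trans (iInf_le _ (⟨0, Nat.succ_pos _⟩ : Fin (a :: l).length)) (le_of_eq rfl))
        (le_iInf fun j => le_trans (iInf_le _ j.succ) (le_of_eq ?_))
      exact List.get_cons_succ

lemma pow_mem_sup_span_mul (I : Ideal R) (t x : R) :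
    ∀ l : List (Ideal R), (∀ P ∈ l, x ∈ I ⊔ Ideal.span {t} * P) →
      x ^ l.length ∈ I ⊔ Ideal.span {t ^ l.length} * l.foldr (· * ·) ⊤ := by
  intro l
  induction l with
  | nil =>
    intro _
    simp [Ideal.span_singleton_one]
  | cons P l ih =>
    intro h
    have hx : x ∈ I ⊔ Ideal.span {t} * P := h P List.mem_cons_self
    have hxn := ih (fun Q hQ => h Q (List.mem_cons_of_mem _ hQ))
    obtain ⟨y, hy, z, hz, hyz⟩ := Submodule.mem_sup.1 hx
    obtain ⟨y', hy', z', hz', hyz'⟩ := Submodule.mem_sup.1 hxn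
    have hzz : z' * z ∈ Ideal.span {t ^ (l.length + 1)} * ((P :: l).foldr (· * ·) ⊤) := by
      have h1 : z' * z ∈ (Ideal.span {t ^ l.length} * l.foldr (· * ·) ⊤) * (Ideal.span {t} * P) :=
        Ideal.mul_mem_mul hz' hz
      have h2 : (Ideal.span {t ^ l.length} * l.foldr (· * ·) ⊤) * (Ideal.span {t} * P)
          = Ideal.span {t ^ (l.length + 1)} * ((P :: l).foldr (· * ·) ⊤) := by
        rw [List.foldr_cons, mul_mul_mul_comm, Ideal.span_singleton_mul_span_singleton,
          ← pow_succ]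
        ring
      rwa [h2] at h1
    have hw : y' * y + (y' * z + z' * y) ∈ I :=
      Ideal.add_mem _ (Ideal.mul_mem_right _ _ hy')
        (Ideal.add_mem _ (Ideal.mul_mem_right _ _ hy') (Ideal.mul_mem_left _ _ hy))
    refine Submodule.mem_sup.2 ⟨_, hw, _, hzz, ?_⟩
    have : x ^ (P :: l).length = (y' + z') * (y + z) := by
      rw [List.length_cons, pow_succ, hyz, hyz']
    rw [this]; ring

end SPrimeAux

namespace SPrimeAux

variable {R : Type*} [CommSemiring R]

lemma decomp (S : Submonoid R)
    (hNoeth : ∀ I : Ideal R, ∃ s ∈ S, ∃ J : Ideal R, J.FG ∧ (∀ x ∈ I, s * x ∈ J) ∧ J ≤ I) :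
    ∀ J : Ideal R, satId S J ≤ J → J.radical ≤ J → Disjoint (S : Set R) (J : Set R) →
      ∃ l : List (Ideal R),
        (∀ P ∈ l, P.IsPrime ∧ Disjoint (S : Set R) (P : Set R)) ∧ J = l.foldr (· ⊓ ·) ⊤ := by
  classical
  have wf : WellFounded (fun a b : {J : Ideal R // satId S J ≤ J} => b < a) := by
    rw [show (fun a b : {J : Ideal R // satId S J ≤ J} => b < a) =
        ((· > ·) : _ → _ → Prop) from rfl]
    refine IsWellFounded.wf (self := wellFoundedGT_iff_monotone_chain_condition.2 ?_)
    intro a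
    set b : ℕ →o Ideal R := ⟨fun n => (a n : Ideal R), fun i j h => a.monotone h⟩ with hbdef
    obtain ⟨s, hs, J₀, ⟨X, hX⟩, hmul, hle⟩ := hNoeth (⨆ k, b k)
    have h1 : ∀ x ∈ X, ∃ k, x ∈ b k := by
      intro x hx
      exact (Submodule.mem_iSup_of_chain b x).1 (hle (hX ▸ Ideal.subset_span hx))
    choose g hg using h1
    set N := X.attach.sup (fun p => g p.1 p.2) with hN
    have hXN : ∀ x ∈ X, x ∈ b N := by
      intro x hx
      exact b.monotone (Finset.le_sup (f := fun p : {y // y ∈ X} => g p.1 p.2)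
        (Finset.mem_attach X ⟨x, hx⟩)) (hg x hx)
    refine ⟨N, fun m hm => ?_⟩
    apply le_antisymm (a.monotone hm)
    show (a m : Ideal R) ≤ (a N : Ideal R)
    intro x hx
    have hxF : x ∈ ⨆ k, b k := le_iSup b m hx
    have hsx : s * x ∈ (a N : Ideal R) := by
      have : s * x ∈ Ideal.span (X : Set R) := hX ▸ hmul x hxF
      exact (Ideal.span_le.2 (fun y hy => hXN y hy)) this
    exact (a N).2 ⟨s, hs, hsx⟩
  suffices H : ∀ t : {J : Ideal R // satId S J ≤ J}, (t : Ideal R).radical ≤ (t : Ideal R) →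
      Disjoint (S : Set R) ((t : Ideal R) : Set R) →
      ∃ l : List (Ideal R), (∀ P ∈ l, P.IsPrime ∧ Disjoint (S : Set R) (P : Set R)) ∧
        (t : Ideal R) = l.foldr (· ⊓ ·) ⊤ by
    intro J h1 h2 h3
    exact H ⟨J, h1⟩ h2 h3
  intro t
  refine wf.induction (C := fun t => (t : Ideal R).radical ≤ (t : Ideal R) →
      Disjoint (S : Set R) ((t : Ideal R) : Set R) →
      ∃ l : List (Ideal R), (∀ P ∈ l, P.IsPrime ∧ Disjoint (S : Set R) (P : Set R)) ∧
        (t : Ideal R) = l.foldr (· ⊓ ·) ⊤) t ?_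
  rintro ⟨J, hsat⟩ IH hrad hdisj
  simp only [Subtype.coe_mk] at hrad hdisj ⊢
  have hJne : J ≠ ⊤ := by
    intro h
    exact Set.disjoint_left.1 hdisj S.one_mem (h ▸ Submodule.mem_top)
  by_cases hp : ∀ a b : R, a * b ∈ J → a ∈ J ∨ b ∈ J
  · refine ⟨[J], ?_, by simp⟩
    rintro P hP
    rw [List.mem_singleton] at hP; subst hP
    exact ⟨⟨hJne, fun {a b} h => hp a b h⟩, hdisj⟩
  · push_neg at hp
    obtain ⟨a, b, hab, ha, hb⟩ := hp
    set A := satId S ((J ⊔ Ideal.span {a}).radical) with hAdef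
    set B := satId S ((J ⊔ Ideal.span {b}).radical) with hBdef
    have haA : a ∈ A := le_satId _ _ (Ideal.le_radical (Ideal.mem_sup_right (Ideal.subset_span rfl)))
    have hbB : b ∈ B := le_satId _ _ (Ideal.le_radical (Ideal.mem_sup_right (Ideal.subset_span rfl)))
    have hJA : J ≤ A := fun x hx => le_satId _ _ (Ideal.le_radical (Ideal.mem_sup_left hx))
    have hJB : J ≤ B := fun x hx => le_satId _ _ (Ideal.le_radical (Ideal.mem_sup_left hx))
    have hABJ : A ⊓ B ≤ J := by
      rintro x ⟨hxA, hxB⟩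
      obtain ⟨s, hs, hsx⟩ := hxA
      obtain ⟨s', hs', hs'x⟩ := hxB
      obtain ⟨n, hn⟩ := Ideal.mem_radical_iff.1 hsx
      obtain ⟨m, hm⟩ := Ideal.mem_radical_iff.1 hs'x
      have hmul2 : (J ⊔ Ideal.span {a}) * (J ⊔ Ideal.span {b}) ≤ J := by
        rw [Ideal.mul_le]
        intro r hr z hz
        obtain ⟨j₁, hj₁, w₁, hw₁, he₁⟩ := Submodule.mem_sup.1 hr
        obtain ⟨j₂, hj₂, w₂, hw₂, he₂⟩ := Submodule.mem_sup.1 hz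
        obtain ⟨c₁, hc₁⟩ := Ideal.mem_span_singleton'.1 hw₁
        obtain ⟨c₂, hc₂⟩ := Ideal.mem_span_singleton'.1 hw₂
        have hrz : r * z = j₁ * (j₂ + c₂ * b) + c₁ * a * j₂ + (c₁ * c₂) * (a * b) := by
          rw [← he₁, ← he₂, ← hc₁, ← hc₂]; ring
        rw [hrz]
        exact Ideal.add_mem _ (Ideal.add_mem _ (Ideal.mul_mem_right _ _ hj₁)
          (Ideal.mul_mem_left _ _ hj₂)) (Ideal.mul_mem_left _ _ hab)
      have hprod : (s ^ n * s' ^ m) * x ^ (n + m) ∈ J := by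
        have h1 : (s * x) ^ n * (s' * x) ^ m ∈ J := hmul2 (Ideal.mul_mem_mul hn hm)
        have h2 : (s * x) ^ n * (s' * x) ^ m = (s ^ n * s' ^ m) * x ^ (n + m) := by ring
        rwa [h2] at h1
      have hxs : x ^ (n + m) ∈ satId S J :=
        ⟨s ^ n * s' ^ m, S.mul_mem (pow_mem hs n) (pow_mem hs' m), hprod⟩
      exact hrad (Ideal.mem_radical_iff.2 ⟨n + m, hsat hxs⟩)
    have hAdis : Disjoint (S : Set R) (A : Set R) := by
      rw [Set.disjoint_left]
      intro s₀ hs₀ hs₀A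
      have hsb : s₀ * b ∈ A ⊓ B :=
        ⟨Ideal.mul_mem_right _ _ hs₀A, Ideal.mul_mem_left _ _ hbB⟩
      exact hb (hsat ⟨s₀, hs₀, hABJ hsb⟩)
    have hBdis : Disjoint (S : Set R) (B : Set R) := by
      rw [Set.disjoint_left]
      intro s₀ hs₀ hs₀B
      have hsa : s₀ * a ∈ A ⊓ B :=
        ⟨Ideal.mul_mem_left _ _ haA, Ideal.mul_mem_right _ _ hs₀B⟩
      exact ha (hsat ⟨s₀, hs₀, hABJ hsa⟩)
    have hAsat : satId S A ≤ A := satId_satId _ _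
    have hBsat : satId S B ≤ B := satId_satId _ _
    have hArad : A.radical ≤ A := radical_satId _ (le_of_eq (Ideal.radical_idem _))
    have hBrad : B.radical ≤ B := radical_satId _ (le_of_eq (Ideal.radical_idem _))
    have hJAlt : J < A := lt_of_le_of_ne hJA (by intro h; exact ha (by rw [h]; exact haA))
    have hJBlt : J < B := lt_of_le_of_ne hJB (by intro h; exact hb (by rw [h]; exact hbB))
    obtain ⟨l₁, hl₁, hl₁e⟩ := IH ⟨A, hAsat⟩ (Subtype.mk_lt_mk.2 hJAlt) hArad hAdis
    obtain ⟨l₂, hl₂, hl₂e⟩ := IH ⟨B, hBsat⟩ (Subtype.mk_lt_mk.2 hJBlt) hBrad hBdis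
    refine ⟨l₁ ++ l₂, ?_, ?_⟩
    · intro P hP
      rcases List.mem_append.1 hP with h | h
      exacts [hl₁ P h, hl₂ P h]
    · rw [foldr_inf_append, ← hl₁e, ← hl₂e]
      exact le_antisymm (le_inf hJA hJB) hABJ

end SPrimeAux

namespace SPrimeAux

variable {R : Type*} [CommSemiring R]

def colonId (I : Ideal R) (u : R) : Ideal R where
  carrier := {x | u * x ∈ I}
  zero_mem' := by simp
  add_mem' := by
    intro a b ha hb
    show u * (a + b) ∈ I
    rw [mul_add]
    exact I.add_mem ha hb
  smul_mem' := by
    intro c x hx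
    show u * (c • x) ∈ I
    have h : u * (c • x) = c * (u * x) := by simp only [smul_eq_mul]; ring
    rw [h]
    exact Ideal.mul_mem_left _ _ hx

end SPrimeAux


open SPrimeAux

/-- In an additively cancellative, zerosumfree, yoked, commutative S-Noetherian
semiring, every proper radical k-ideal disjoint from S is a finite intersection of
S-prime ideals. -/
theorem radical_eq_finite_inter_S_prime {R : Type*} [CommSemiring R]
    (hcanc : ∀ a b c : R, a + b = a + c → b = c)
    (hzsf : ∀ a b : R, a + b = 0 → a = 0 ∧ b = 0)
    (hyoked : ∀ a b : R, ∃ c : R, a + c = b ∨ b + c = a)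
    (S : Set R) (hS1 : (1 : R) ∈ S) (hSmul : ∀ s ∈ S, ∀ t ∈ S, s * t ∈ S)
    (hNoeth : ∀ I : Ideal R, ∃ s ∈ S, ∃ J : Ideal R, J.FG ∧ (∀ x ∈ I, s * x ∈ J) ∧ J ≤ I)
    (I : Ideal R) (hIproper : I ≠ ⊤) (hIS : Disjoint S (I : Set R))
    (hIk : ∀ a b : R, a + b ∈ I → a ∈ I → b ∈ I)
    (hIrad : I = I.radical) :
    ∃ (n : ℕ) (P : Fin n → Ideal R),
      (∀ i, Disjoint S ((P i : Set R))) ∧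
      (∀ i, ∃ s ∈ S, ∀ a b : R, a * b ∈ P i → s * a ∈ P i ∨ s * b ∈ P i) ∧
      I = ⨅ i, P i := by
  classical
  set S' : Submonoid R :=
    { carrier := S, mul_mem' := fun {a b} ha hb => hSmul a ha b hb, one_mem' := hS1 } with hS'def
  have hIrad' : I.radical ≤ I := le_of_eq hIrad.symm
  set Istar := satId S' I with hIstardef
  have hsat : satId S' Istar ≤ Istar := satId_satId _ _
  have hrad : Istar.radical ≤ Istar := radical_satId _ hIrad'
  have hdisj : Disjoint (S' : Set R) (Istar : Set R) := by
    rw [Set.disjoint_left]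
    rintro x hx ⟨s, hs, hsx⟩
    exact Set.disjoint_left.1 hIS (hSmul s hs x hx) hsx
  obtain ⟨l, hl, hle⟩ := decomp S' hNoeth Istar hsat hrad hdisj
  -- construct t ∈ S with t * Istar ⊆ I
  obtain ⟨s, hs, J₀, ⟨X, hXspan⟩, hmulX, hleX⟩ := hNoeth Istar
  have hXI : ∀ x ∈ X, ∃ sx ∈ S', sx * x ∈ I := by
    intro x hx
    exact hleX (hXspan ▸ Ideal.subset_span hx)
  choose g hg1 hg2 using hXI
  set u := X.attach.prod (fun p => g p.1 p.2) with hudef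
  have huS : u ∈ S' := S'.prod_mem (fun p _ => hg1 p.1 p.2)
  have huX : ∀ y ∈ Ideal.span (X : Set R), u * y ∈ I := by
    intro y hy
    suffices h : Ideal.span (X : Set R) ≤ colonId I u from h hy
    rw [Ideal.span_le]
    intro x hx
    show u * x ∈ I
    have he : (X.attach.erase ⟨x, hx⟩).prod (fun p => g p.1 p.2) * g x hx = u :=
      Finset.prod_erase_mul _ _ (Finset.mem_attach X ⟨x, hx⟩)
    have h2 : u * x = (X.attach.erase ⟨x, hx⟩).prod (fun p => g p.1 p.2) * (g x hx * x) := by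
      rw [← he, mul_assoc]
    rw [h2]
    exact Ideal.mul_mem_left _ _ (hg2 x hx)
  set t := u * s with htdef
  have htS : t ∈ S := hSmul u huS s hs
  have htx : ∀ x ∈ Istar, t * x ∈ I := by
    intro x hx
    have h1 : s * x ∈ Ideal.span (X : Set R) := hXspan ▸ hmulX x hx
    have h2 : t * x = u * (s * x) := by rw [htdef]; ring
    rw [h2]
    exact huX _ h1
  have hne : l ≠ [] := by
    intro h
    rw [h] at hle
    simp only [List.foldr_nil] at hle
    exact Set.disjoint_left.1 hdisj S'.one_mem (by rw [hle]; exact Submodule.mem_top)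
  refine ⟨l.length, fun i => I ⊔ Ideal.span {t} * l.get i, ?_, ?_, ?_⟩
  · intro i
    have hIP : I ≤ l.get i := by
      have h1 : I ≤ Istar := le_satId _ _
      have h2 : Istar ≤ l.get i := hle ▸ foldr_inf_le_of_mem (l.get_mem i)
      exact le_trans h1 h2
    have hQP : I ⊔ Ideal.span {t} * l.get i ≤ l.get i := sup_le hIP Ideal.mul_le_right
    exact (hl (l.get i) (l.get_mem i)).2.mono_right (SetLike.coe_subset_coe.2 hQP)
  · intro i
    have hQP : I ⊔ Ideal.span {t} * l.get i ≤ l.get i :=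
      sup_le (le_trans (le_satId _ _) (hle ▸ foldr_inf_le_of_mem (l.get_mem i)))
        Ideal.mul_le_right
    refine ⟨t, htS, fun a b hab => ?_⟩
    rcases (hl (l.get i) (l.get_mem i)).1.mem_or_mem (hQP hab) with h | h
    · exact Or.inl (Submodule.mem_sup_right (Ideal.mul_mem_mul (Ideal.subset_span rfl) h))
    · exact Or.inr (Submodule.mem_sup_right (Ideal.mul_mem_mul (Ideal.subset_span rfl) h))
  · apply le_antisymm
    · exact le_iInf fun i => le_sup_left
    · intro x hx
      rw [Submodule.mem_iInf] at hx
      have hmem : ∀ P ∈ l, x ∈ I ⊔ Ideal.span {t} * P := by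
        intro P hP
        obtain ⟨i, hi⟩ := List.mem_iff_get.1 hP
        rw [← hi]
        exact hx i
      have hpow := pow_mem_sup_span_mul I t x l hmem
      have hprodI : Ideal.span {t ^ l.length} * l.foldr (· * ·) ⊤ ≤ I := by
        rw [Ideal.mul_le]
        intro r hr z hz
        obtain ⟨c, hc⟩ := Ideal.mem_span_singleton'.1 hr
        have hzI : z ∈ Istar := hle ▸ (foldr_prod_le_foldr_inf l hz)
        have htz : t * z ∈ I := htx z hzI
        obtain ⟨k, hk⟩ : ∃ k, l.length = k + 1 := by
          cases l with
          | nil => exact absurd rfl hne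
          | cons a l => exact ⟨l.length, rfl⟩
        have hrzz : r * z = (c * t ^ k) * (t * z) := by rw [← hc, hk]; ring
        rw [hrzz]
        exact Ideal.mul_mem_left _ _ htz
      have hxl : x ^ l.length ∈ I := by
        rcases Submodule.mem_sup.1 hpow with ⟨y, hy, z, hz, hyz⟩
        rw [← hyz]
        exact I.add_mem hy (hprodI hz)
      rw [hIrad]
      exact Ideal.mem_radical_iff.2 ⟨l.length, hxl⟩
end

section
/- Let R be a commutative semiring, S a multiplicative subset of R, and let Rₛ be a localization of R at S with canonical map f : R → Rₛ. For an ideal I of R, let S(I) = f⁻¹(IRₛ) denote the contraction of the extension of I. If A is an S-primary ideal of R with √A = P, then S(A) is S(P)-primary, in the sense that for all a, b ∈ R, ab ∈ S(A) implies a ∈ S(A) or b ∈ S(P). -/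
namespace IsLocalization

variable {R Rs : Type*} [CommSemiring R] [CommSemiring Rs] [Algebra R Rs]
  (M : Submonoid R) [IsLocalization M Rs]

theorem mem_comap_map_algebraMap_iff (I : Ideal R) (x : R) :
    x ∈ (I.map (algebraMap R Rs)).comap (algebraMap R Rs) ↔ ∃ m ∈ M, m * x ∈ I := by
  rw [Ideal.mem_comap, algebraMap_mem_map_algebraMap_iff M]

theorem mem_comap_map_or_mem_comap_map_radical {A : Ideal R} {s : R} (hs : s ∈ M)
    (hA : ∀ a b : R, a * b ∈ A → s * a ∈ A ∨ s * b ∈ A.radical) {a b : R}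
    (hab : a * b ∈ (A.map (algebraMap R Rs)).comap (algebraMap R Rs)) :
    a ∈ (A.map (algebraMap R Rs)).comap (algebraMap R Rs) ∨
      b ∈ (A.radical.map (algebraMap R Rs)).comap (algebraMap R Rs) := by
  simp only [mem_comap_map_algebraMap_iff M] at hab ⊢
  obtain ⟨m, hm, hmab⟩ := hab
  rcases hA a (m * b) (by rwa [mul_left_comm]) with ha | hb
  · exact Or.inl ⟨s, hs, ha⟩
  · exact Or.inr ⟨s * m, mul_mem hs hm, by rwa [mul_assoc]⟩

end IsLocalization

theorem contraction_S_primary_general {R Rs : Type*} [CommSemiring R] [CommSemiring Rs]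
    [Algebra R Rs]
    (S : Set R)
    [IsLocalization (Submonoid.closure S) Rs]
    (A P : Ideal R)
    (hAprim : ∃ s ∈ S, ∀ a b : R, a * b ∈ A → s * a ∈ A ∨ s * b ∈ A.radical)
    (hP : A.radical = P) :
    ∀ a b : R,
      a * b ∈ (A.map (algebraMap R Rs)).comap (algebraMap R Rs) →
      a ∈ (A.map (algebraMap R Rs)).comap (algebraMap R Rs) ∨
      b ∈ (P.map (algebraMap R Rs)).comap (algebraMap R Rs) := by
  obtain ⟨s, hsS, hs⟩ := hAprim
  subst hP
  exact fun a b ↦ IsLocalization.mem_comap_map_or_mem_comap_map_radical _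
    (Submonoid.subset_closure hsS) hs

/-- If `A` is an S-P-primary ideal of a commutative semiring `R`, then the
contraction `S(A)` of its extension to the localization is `S(P)`-primary:
`ab ∈ S(A)` implies `a ∈ S(A)` or `b ∈ S(P)`. -/
theorem contraction_S_primary {R Rs : Type*} [CommSemiring R] [CommSemiring Rs]
    [Algebra R Rs]
    (S : Set R) (hS1 : (1 : R) ∈ S) (hSmul : ∀ s ∈ S, ∀ t ∈ S, s * t ∈ S)
    [IsLocalization (Submonoid.closure S) Rs]
    (A P : Ideal R) (hAS : Disjoint S (A : Set R))
    (hAprim : ∃ s ∈ S, ∀ a b : R, a * b ∈ A → s * a ∈ A ∨ s * b ∈ A.radical)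
    (hP : A.radical = P) :
    ∀ a b : R,
      a * b ∈ (A.map (algebraMap R Rs)).comap (algebraMap R Rs) →
      a ∈ (A.map (algebraMap R Rs)).comap (algebraMap R Rs) ∨
      b ∈ (P.map (algebraMap R Rs)).comap (algebraMap R Rs) :=
  contraction_S_primary_general S A P hAprim hP
end

section
/- Let R be a commutative semiring and S a multiplicative subset of R. If P is an S-prime ideal of R, then the S-radical √[S]P = {a ∈ R : s·aⁿ ∈ P for some s ∈ S and some n ≥ 1} is a prime ideal of R. -/
/-!
Since `(s * a) ^ n = s ^ (n - 1) * (s * a ^ n)` for `n ≥ 1`, the `S`-radical of `I` is the set of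
`a` with `s * a ∈ √I` for some `s ∈ S`, and in that form it is visibly an ideal. Primality: if
`s * (a * b) ^ n ∈ P`, apply the `S`-primality of `P` to `(s * a ^ n) * b ^ n`.
-/

namespace Ideal

variable {R : Type*} [CommSemiring R]

def sRadical (S : Submonoid R) (I : Ideal R) : Ideal R where
  carrier := {a | ∃ s ∈ S, s * a ∈ I.radical}
  zero_mem' := ⟨1, S.one_mem, by simp⟩
  add_mem' := by
    rintro a b ⟨s, hs, ha⟩ ⟨t, ht, hb⟩
    refine ⟨s * t, S.mul_mem hs ht, ?_⟩
    rw [show s * t * (a + b) = t * (s * a) + s * (t * b) by ring]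
    exact add_mem (mul_mem_left _ _ ha) (mul_mem_left _ _ hb)
  smul_mem' := by
    rintro r a ⟨s, hs, ha⟩
    refine ⟨s, hs, ?_⟩
    rw [smul_eq_mul, mul_left_comm]
    exact mul_mem_left _ _ ha

theorem mem_sRadical_iff {S : Submonoid R} {I : Ideal R} {a : R} :
    a ∈ sRadical S I ↔ ∃ s ∈ S, ∃ n : ℕ, 1 ≤ n ∧ s * a ^ n ∈ I := by
  constructor
  · rintro ⟨s, hs, n, hn⟩
    refine ⟨s ^ (n + 1), S.pow_mem hs _, n + 1, Nat.le_add_left 1 n, ?_⟩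
    rw [← mul_pow, pow_succ]
    exact mul_mem_right _ _ hn
  · rintro ⟨s, hs, _ | n, hn, hsa⟩
    · omega
    · refine ⟨s, hs, n + 1, ?_⟩
      rw [show (s * a) ^ (n + 1) = s ^ n * (s * a ^ (n + 1)) by ring]
      exact mul_mem_left _ _ hsa

def IsSPrime (S : Submonoid R) (P : Ideal R) : Prop :=
  Disjoint (S : Set R) P ∧ ∃ s ∈ S, ∀ a b : R, a * b ∈ P → s * a ∈ P ∨ s * b ∈ P

theorem sRadical_ne_top {S : Submonoid R} {I : Ideal R} (h : Disjoint (S : Set R) I) :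
    sRadical S I ≠ ⊤ := by
  intro htop
  obtain ⟨s, hs, n, hsn⟩ := (eq_top_iff_one _).mp htop
  rw [mul_one] at hsn
  exact Set.disjoint_left.mp h (S.pow_mem hs n) hsn

theorem IsSPrime.isPrime_sRadical {S : Submonoid R} {P : Ideal R} (hP : IsSPrime S P) :
    (sRadical S P).IsPrime := by
  obtain ⟨hdisj, s₀, hs₀, hprime⟩ := hP
  refine ⟨sRadical_ne_top hdisj, fun {a b} hab => ?_⟩
  obtain ⟨s, hs, n, hn, hsab⟩ := mem_sRadical_iff.mp hab
  rw [mul_pow, ← mul_assoc] at hsab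
  rcases hprime _ _ hsab with ha | hb
  · exact Or.inl <| mem_sRadical_iff.mpr ⟨s₀ * s, S.mul_mem hs₀ hs, n, hn, by rwa [mul_assoc]⟩
  · exact Or.inr <| mem_sRadical_iff.mpr ⟨s₀, hs₀, n, hn, hb⟩

end Ideal

/-- The S-radical of every S-prime ideal of a commutative semiring is a prime
ideal. -/
theorem sRadical_of_sPrime_isPrime {R : Type*} [CommSemiring R]
    (S : Set R) (hS1 : (1 : R) ∈ S) (hSmul : ∀ s ∈ S, ∀ t ∈ S, s * t ∈ S)
    (P : Ideal R) (hPS : Disjoint S (P : Set R))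
    (hPprime : ∃ s ∈ S, ∀ a b : R, a * b ∈ P → s * a ∈ P ∨ s * b ∈ P) :
    ∃ Q : Ideal R,
      (Q : Set R) = {a : R | ∃ s ∈ S, ∃ n : ℕ, 1 ≤ n ∧ s * a ^ n ∈ P} ∧
      Q.IsPrime := by
  let M : Submonoid R := ⟨⟨S, fun {s t} hs ht => hSmul s hs t ht⟩, hS1⟩
  exact ⟨Ideal.sRadical M P, Set.ext fun _ => Ideal.mem_sRadical_iff,
    Ideal.IsSPrime.isPrime_sRadical (S := M) ⟨hPS, hPprime⟩⟩
end

section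
/- Let R be a commutative semiring and S a multiplicative subset of R. If A is an S-primary ideal of R, then the S-radical √[S]A = {a ∈ R : s·aⁿ ∈ A for some s ∈ S and some n ≥ 1} is a prime ideal of R. -/
/-!
Let `s₀ ∈ S` witness that `A` is `S`-primary. The `S`-radical of `A` is the colon ideal
`√A : s₀ = {a | a s₀ ∈ √A}`: from `s aⁿ ∈ A` the primary condition gives `s₀ aⁿ ∈ √A`, since its
other alternative `s₀ s ∈ A` would meet `S`. This colon ideal is proper because `s₀ ∉ √A`, and it is
prime by the primary condition applied to `(s₀ a)ⁿ · bⁿ ∈ A`.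
-/

theorem pow_succ_mem_of_mul_mem {R : Type*} [Monoid R] {S : Set R}
    (hSmul : ∀ s ∈ S, ∀ t ∈ S, s * t ∈ S) {s : R} (hs : s ∈ S) : ∀ n : ℕ, s ^ (n + 1) ∈ S
  | 0 => by simpa using hs
  | n + 1 => by
    rw [pow_succ]
    exact hSmul _ (pow_succ_mem_of_mul_mem hSmul hs n) _ hs

namespace Ideal

open Submodule

variable {R : Type*} [CommSemiring R] {A : Ideal R} {S : Set R} {s₀ : R}

theorem mul_mem_radical_of_mul_pow_mem {s a : R} {n : ℕ} (h : s * a ^ n ∈ A.radical) :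
    s * a ∈ A.radical := by
  cases n with
  | zero => exact A.radical.mul_mem_right a (by simpa using h)
  | succ k =>
    refine mem_radical_of_pow_mem (m := k + 1) ?_
    rw [show (s * a) ^ (k + 1) = s ^ k * (s * a ^ (k + 1)) by ring]
    exact A.radical.mul_mem_left _ h

theorem notMem_radical_of_disjoint (hSmul : ∀ s ∈ S, ∀ t ∈ S, s * t ∈ S)
    (hAS : Disjoint S (A : Set R)) {s : R} (hs : s ∈ S) : s ∉ A.radical := fun ⟨n, hn⟩ ↦
  Set.disjoint_left.mp hAS (pow_succ_mem_of_mul_mem hSmul hs n)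
    (by rw [pow_succ]; exact A.mul_mem_right s hn)

theorem coe_colon_singleton_radical_eq_sRadical (hSmul : ∀ s ∈ S, ∀ t ∈ S, s * t ∈ S)
    (hAS : Disjoint S (A : Set R)) (hs₀ : s₀ ∈ S)
    (hprim : ∀ a b : R, a * b ∈ A → s₀ * a ∈ A ∨ s₀ * b ∈ A.radical) :
    (A.radical.colon {s₀} : Set R) = {a : R | ∃ s ∈ S, ∃ n : ℕ, 1 ≤ n ∧ s * a ^ n ∈ A} := by
  ext a
  simp only [SetLike.mem_coe, mem_colon_singleton, smul_eq_mul, Set.mem_ofPred_eq]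
  constructor
  · rintro ⟨k, hk⟩
    refine ⟨s₀ ^ (k + 1), pow_succ_mem_of_mul_mem hSmul hs₀ k, k + 1, by omega, ?_⟩
    rw [← mul_pow, mul_comm s₀, pow_succ]
    exact A.mul_mem_right _ hk
  · rintro ⟨s, hs, n, -, h⟩
    rcases hprim s (a ^ n) h with h | h
    · exact (Set.disjoint_left.mp hAS (hSmul _ hs₀ _ hs) h).elim
    · rw [mul_comm]
      exact mul_mem_radical_of_mul_pow_mem h

theorem isPrime_colon_singleton_radical
    (hprim : ∀ a b : R, a * b ∈ A → s₀ * a ∈ A ∨ s₀ * b ∈ A.radical) (hs₀ : s₀ ∉ A.radical) :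
    (A.radical.colon {s₀}).IsPrime := by
  refine ⟨fun htop ↦ hs₀ ?_, fun {a b} hab ↦ ?_⟩
  · simpa using (eq_top_iff_one _).mp htop
  simp only [mem_colon_singleton, smul_eq_mul] at hab ⊢
  obtain ⟨n, hn⟩ := hab
  have hsplit : (s₀ ^ n * a ^ n) * b ^ n ∈ A := by
    rwa [← mul_pow, ← mul_pow, show s₀ * a * b = a * b * s₀ by ring]
  rcases hprim _ _ hsplit with h | h
  · left
    refine ⟨n + 1, ?_⟩
    rw [show (a * s₀) ^ (n + 1) = a * (s₀ * (s₀ ^ n * a ^ n)) by ring]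
    exact A.mul_mem_left a h
  · right
    rw [mul_comm]
    exact mul_mem_radical_of_mul_pow_mem h

end Ideal

theorem sRadical_of_sPrimary_isPrime_general {R : Type*} [CommSemiring R]
    (S : Set R) (hSmul : ∀ s ∈ S, ∀ t ∈ S, s * t ∈ S)
    (A : Ideal R) (hAS : Disjoint S (A : Set R))
    (hAprim : ∃ s ∈ S, ∀ a b : R, a * b ∈ A → s * a ∈ A ∨ s * b ∈ A.radical) :
    ∃ Q : Ideal R,
      (Q : Set R) = {a : R | ∃ s ∈ S, ∃ n : ℕ, 1 ≤ n ∧ s * a ^ n ∈ A} ∧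
      Q.IsPrime := by
  obtain ⟨s₀, hs₀, hprim⟩ := hAprim
  exact ⟨_, Ideal.coe_colon_singleton_radical_eq_sRadical hSmul hAS hs₀ hprim,
    Ideal.isPrime_colon_singleton_radical hprim (Ideal.notMem_radical_of_disjoint hSmul hAS hs₀)⟩

/-- The S-radical of every S-primary ideal of a commutative semiring is a prime
ideal. -/
theorem sRadical_of_sPrimary_isPrime {R : Type*} [CommSemiring R]
    (S : Set R) (hS1 : (1 : R) ∈ S) (hSmul : ∀ s ∈ S, ∀ t ∈ S, s * t ∈ S)
    (A : Ideal R) (hAS : Disjoint S (A : Set R))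
    (hAprim : ∃ s ∈ S, ∀ a b : R, a * b ∈ A → s * a ∈ A ∨ s * b ∈ A.radical) :
    ∃ Q : Ideal R,
      (Q : Set R) = {a : R | ∃ s ∈ S, ∃ n : ℕ, 1 ≤ n ∧ s * a ^ n ∈ A} ∧
      Q.IsPrime :=
  sRadical_of_sPrimary_isPrime_general S hSmul A hAS hAprim
end

section
/- Let R be a principal ideal semidomain and S a multiplicative subset of R. If A is a nonzero S-primary ideal of R, so that A = (v·pᵏ) with p irreducible, (p) ∩ S = ∅, (v) ∩ S ≠ ∅, and k ≥ 1, then the radical P = √A is an S-maximal ideal of R: P is disjoint from S, and for every ideal I of R with P ⊆ I, either there exists s ∈ S with sI ⊆ P, or I ∩ S ≠ ∅. -/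
/-! Pick `x ∈ (v) ∩ S`; then `x * pᵏ ∈ A` while `s * x ∉ A`, so the S-primary witness `s` gives
`s * p ∈ √A`. The conclusion then comes from the maximality of `(p)`: an ideal `I ⊇ √A` either
lies in `(p)`, and `s * I ⊆ (s * p) ⊆ √A`, or satisfies `I + (p) = R`, and `s ∈ I`. -/

section

variable {R : Type*} [CommSemiring R]

theorem Ideal.disjoint_radical_of_mul_closed {S : Set R}
    (hS : ∀ s ∈ S, ∀ t ∈ S, s * t ∈ S) {A : Ideal R} (hAS : Disjoint S (A : Set R)) :
    Disjoint S (A.radical : Set R) := by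
  refine Set.disjoint_left.mpr fun t ht ⟨n, hn⟩ => ?_
  have hpow : ∀ m : ℕ, t ^ (m + 1) ∈ S := fun m => by
    induction m with
    | zero => simpa using ht
    | succ m ih => rw [pow_succ]; exact hS _ ih _ ht
  exact Set.disjoint_left.mp hAS (hpow n) (pow_succ t n ▸ A.mul_mem_right t hn)

theorem Ideal.mul_mem_radical_of_mul_pow_mem_radical {A : Ideal R} {s p : R} {k : ℕ}
    (h : s * p ^ k ∈ A.radical) : s * p ∈ A.radical :=
  A.radical_isRadical ⟨k + 1, by
    rw [show (s * p) ^ (k + 1) = (s ^ k * p) * (s * p ^ k) by ring]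
    exact A.radical.mul_mem_left _ h⟩

theorem Ideal.mul_mem_or_mem_of_irreducible [IsPrincipalIdealRing R] {p s : R}
    (hp : Irreducible p) {J I : Ideal R} (hsp : s * p ∈ J) (hJI : J ≤ I) :
    (∀ x ∈ I, s * x ∈ J) ∨ s ∈ I := by
  rcases (PrincipalIdealRing.isMaximal_of_irreducible hp).out.le_iff.mp
      (le_sup_right : Ideal.span {p} ≤ I ⊔ Ideal.span {p}) with htop | hle
  · right
    obtain ⟨i, hi, r, hr, hir⟩ := Submodule.mem_sup.mp (htop ▸ Submodule.mem_top (x := (1 : R)))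
    obtain ⟨c, rfl⟩ := Ideal.mem_span_singleton'.mp hr
    have hs : s = s * i + c * (s * p) := by
      rw [show s * i + c * (s * p) = s * (i + c * p) by ring, hir, mul_one]
    rw [hs]
    exact I.add_mem (I.mul_mem_left s hi) (I.mul_mem_left c (hJI hsp))
  · left
    intro x hx
    obtain ⟨c, rfl⟩ := Ideal.mem_span_singleton'.mp (hle ▸ Ideal.mem_sup_left hx)
    rw [mul_left_comm]
    exact J.mul_mem_left c hsp

end

theorem radical_sPrimary_isSMaximal_general {R : Type*} [CommSemiring R]
    (hPIS : ∀ I : Ideal R, ∃ a : R, I = Ideal.span {a})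
    (S : Set R) (hSmul : ∀ s ∈ S, ∀ t ∈ S, s * t ∈ S)
    (A : Ideal R)
    (hAS : Disjoint S (A : Set R))
    (hAprim : ∃ s ∈ S, ∀ a b : R, a * b ∈ A → s * a ∈ A ∨ s * b ∈ A.radical)
    (v p : R) (k : ℕ) (hpirr : Irreducible p)
    (hvS : (((Ideal.span {v} : Ideal R) : Set R) ∩ S).Nonempty)
    (hAeq : A = Ideal.span {v * p ^ k}) :
    Disjoint S ((A.radical : Set R)) ∧
    ∀ I : Ideal R, A.radical ≤ I →
      (∃ s ∈ S, ∀ x ∈ I, s * x ∈ A.radical) ∨ ((I : Set R) ∩ S).Nonempty := by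
  have : IsPrincipalIdealRing R := ⟨fun I => ⟨hPIS I⟩⟩
  obtain ⟨s, hsS, hs⟩ := hAprim
  obtain ⟨x, hxv, hxS⟩ := hvS
  have hxpk : x * p ^ k ∈ A := by
    rw [hAeq, Ideal.mem_span_singleton]
    exact mul_dvd_mul_right (Ideal.mem_span_singleton.mp hxv) _
  have hsp : s * p ∈ A.radical := by
    rcases hs x (p ^ k) hxpk with hsx | hspk
    · exact absurd hsx (Set.disjoint_left.mp hAS (hSmul s hsS x hxS))
    · exact Ideal.mul_mem_radical_of_mul_pow_mem_radical hspk
  refine ⟨Ideal.disjoint_radical_of_mul_closed hSmul hAS, fun I hI => ?_⟩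
  rcases Ideal.mul_mem_or_mem_of_irreducible hpirr hsp hI with hsI | hsI
  exacts [Or.inl ⟨s, hsS, hsI⟩, Or.inr ⟨s, hsI, hsS⟩]

/-- In a principal ideal semidomain, the radical of a nonzero S-primary ideal
`A = (v * pᵏ)` is an S-maximal ideal. -/
theorem radical_sPrimary_isSMaximal {R : Type*} [CommSemiring R] [Nontrivial R]
    [NoZeroDivisors R]
    (hPIS : ∀ I : Ideal R, ∃ a : R, I = Ideal.span {a})
    (S : Set R) (hS1 : (1 : R) ∈ S) (hSmul : ∀ s ∈ S, ∀ t ∈ S, s * t ∈ S)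
    (A : Ideal R) (hA : A ≠ ⊥)
    (hAS : Disjoint S (A : Set R))
    (hAprim : ∃ s ∈ S, ∀ a b : R, a * b ∈ A → s * a ∈ A ∨ s * b ∈ A.radical)
    (v p : R) (k : ℕ) (hk : 1 ≤ k) (hp0 : p ≠ 0) (hpirr : Irreducible p)
    (hpS : ((Ideal.span {p} : Ideal R) : Set R) ∩ S = ∅)
    (hvS : (((Ideal.span {v} : Ideal R) : Set R) ∩ S).Nonempty)
    (hAeq : A = Ideal.span {v * p ^ k}) :
    Disjoint S ((A.radical : Set R)) ∧
    ∀ I : Ideal R, A.radical ≤ I →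
      (∃ s ∈ S, ∀ x ∈ I, s * x ∈ A.radical) ∨ ((I : Set R) ∩ S).Nonempty :=
  radical_sPrimary_isSMaximal_general hPIS S hSmul A hAS hAprim v p k hpirr hvS hAeq
end
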